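/- arXiv:2403.03195 — 5 statements merged into one kernel-verified Lean document; each statement's English description precedes it below -/
import Mathlib

section
/- Let x, y ∈ ℝ^N and 1 < p < 2. Then there exists a constant C > 0 (depending only on p and N) such that ⟨|x|^{p-2} x - |y|^{p-2} y, x - y⟩ ≥ C |x - y|^2 (|x| + |y|)^{p-2}, where the left side is interpreted as 0 when x = y. -/
open Real

/-- Bernoulli-based sublemma: for `0 < b ≤ a` and `0 < q ≤ 1`,
`q * a ^ (q-1) * (a - b) ≤ a ^ q - b ^ q`. -/
lemma simon_aux_bernoulli {a b q : ℝ} (hb : 0 < b) (hba : b ≤ a) (hq0 : 0 < q) (hq1 : q ≤ 1) :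
    q * a ^ (q - 1) * (a - b) ≤ a ^ q - b ^ q := by
  have ha : 0 < a := hb.trans_le hba
  have hs : (-1 : ℝ) ≤ b / a - 1 := by
    have : 0 ≤ b / a := le_of_lt (div_pos hb ha)
    linarith
  have hB := rpow_one_add_le_one_add_mul_self hs hq0.le hq1
  rw [show (1 : ℝ) + (b / a - 1) = b / a by ring] at hB
  -- (b/a)^q ≤ 1 + q*(b/a - 1)
  have hda : (b / a) ^ q = b ^ q / a ^ q := Real.div_rpow hb.le ha.le q
  rw [hda] at hB
  have haq : 0 < a ^ q := Real.rpow_pos_of_pos ha q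
  have h2 : b ^ q ≤ a ^ q + q * (b / a - 1) * a ^ q := by
    have := mul_le_mul_of_nonneg_right hB haq.le
    rw [div_mul_cancel₀ _ haq.ne'] at this
    linarith [this]
  have haq1 : a ^ q = a ^ (q - 1) * a := by
    rw [← Real.rpow_add_one ha.ne', sub_add_cancel]
  have h3 : q * (b / a - 1) * a ^ q = q * a ^ (q - 1) * (b - a) := by
    rw [haq1]
    field_simp
  rw [h3] at h2
  linarith

/-- Endpoint inequality `t = ab`. -/
lemma simon_E1 {p a b : ℝ} (hp1 : 1 < p) (hp2 : p < 2) (ha : 0 < a) (hb : 0 < b) (hba : b ≤ a) :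
    (p - 1) * (a - b) ^ 2 ≤ (a ^ (p - 1) - b ^ (p - 1)) * (a - b) * (a + b) ^ (2 - p) := by
  have hab : 0 < a + b := by linarith
  have h1 : (a + b) ^ (p - 2) ≤ a ^ (p - 2) :=
    Real.rpow_le_rpow_of_nonpos ha (by linarith) (by linarith)
  have hB := simon_aux_bernoulli hb hba (q := p - 1) (by linarith) (by linarith)
  rw [show p - 1 - 1 = p - 2 by ring] at hB
  have hd : 0 ≤ a - b := by linarith
  have key : (p - 1) * (a - b) * (a + b) ^ (p - 2) ≤ a ^ (p - 1) - b ^ (p - 1) := by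
    calc (p - 1) * (a - b) * (a + b) ^ (p - 2)
        ≤ (p - 1) * (a - b) * a ^ (p - 2) := by
          exact mul_le_mul_of_nonneg_left h1 (mul_nonneg (by linarith) hd)
      _ = (p - 1) * a ^ (p - 2) * (a - b) := by ring
      _ ≤ a ^ (p - 1) - b ^ (p - 1) := hB
  have hcancel : (a + b) ^ (p - 2) * (a + b) ^ (2 - p) = 1 := by
    rw [← Real.rpow_add hab, show p - 2 + (2 - p) = 0 by ring, Real.rpow_zero]
  have h2 := mul_le_mul_of_nonneg_right key
    (mul_nonneg hd (Real.rpow_nonneg hab.le (2 - p)))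
  calc (p - 1) * (a - b) ^ 2
      = (p - 1) * (a - b) * (a + b) ^ (p - 2) * ((a - b) * (a + b) ^ (2 - p)) := by
        rw [show (p-1) * (a-b) * (a+b)^(p-2) * ((a-b) * (a+b)^(2-p))
            = (p-1) * ((a-b)*(a-b)) * ((a+b)^(p-2) * (a+b)^(2-p)) by ring, hcancel]
        ring
    _ ≤ (a ^ (p - 1) - b ^ (p - 1)) * ((a - b) * (a + b) ^ (2 - p)) := h2
    _ = (a ^ (p - 1) - b ^ (p - 1)) * (a - b) * (a + b) ^ (2 - p) := by ring

/-- Endpoint inequality `t = -ab`. -/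
lemma simon_E2 {p a b : ℝ} (hp1 : 1 < p) (hp2 : p < 2) (ha : 0 < a) (hb : 0 < b) :
    (p - 1) * (a + b) ^ 2 ≤ (a ^ (p - 1) + b ^ (p - 1)) * (a + b) * (a + b) ^ (2 - p) := by
  have hab : 0 < a + b := by linarith
  have h1 : (a + b) ^ (p - 2) ≤ a ^ (p - 2) :=
    Real.rpow_le_rpow_of_nonpos ha (by linarith) (by linarith)
  have h2 : (a + b) ^ (p - 2) ≤ b ^ (p - 2) :=
    Real.rpow_le_rpow_of_nonpos hb (by linarith) (by linarith)
  have hsa : a ^ (p - 2) * a = a ^ (p - 1) := by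
    rw [show p - 1 = p - 2 + 1 by ring, Real.rpow_add_one ha.ne']
  have hsb : b ^ (p - 2) * b = b ^ (p - 1) := by
    rw [show p - 1 = p - 2 + 1 by ring, Real.rpow_add_one hb.ne']
  have hsab : (a + b) ^ (p - 2) * (a + b) = (a + b) ^ (p - 1) := by
    rw [show p - 1 = p - 2 + 1 by ring, Real.rpow_add_one hab.ne']
  have hsub : (a + b) ^ (p - 1) ≤ a ^ (p - 1) + b ^ (p - 1) := by
    rw [← hsa, ← hsb, ← hsab]
    have := mul_le_mul_of_nonneg_right h1 ha.le
    have := mul_le_mul_of_nonneg_right h2 hb.le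
    nlinarith
  have hcancel : (a + b) ^ (p - 1) * (a + b) ^ (2 - p) = a + b := by
    rw [← Real.rpow_add hab, show p - 1 + (2 - p) = 1 by ring, Real.rpow_one]
  have h3 := mul_le_mul_of_nonneg_right hsub
    (mul_nonneg hab.le (Real.rpow_nonneg hab.le (2 - p)))
  calc (p - 1) * (a + b) ^ 2 ≤ 1 * (a + b) ^ 2 := by nlinarith
    _ = (a + b) ^ (p - 1) * ((a + b) * (a + b) ^ (2 - p)) := by
        rw [show (a+b)^(p-1) * ((a+b) * (a+b)^(2-p))
            = (a+b)^(p-1) * (a+b)^(2-p) * (a+b) by ring, hcancel]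
        ring
    _ ≤ (a ^ (p - 1) + b ^ (p - 1)) * ((a + b) * (a + b) ^ (2 - p)) := h3
    _ = (a ^ (p - 1) + b ^ (p - 1)) * (a + b) * (a + b) ^ (2 - p) := by ring

/-- The key scalar inequality. -/
lemma simon_key {p a b t : ℝ} (hp1 : 1 < p) (hp2 : p < 2) (ha : 0 ≤ a) (hb : 0 ≤ b)
    (hab : 0 < a + b) (ht : |t| ≤ a * b) :
    (p - 1) * (a ^ 2 - 2 * t + b ^ 2) ≤
      (a ^ (p - 2) * a ^ 2 - (a ^ (p - 2) + b ^ (p - 2)) * t + b ^ (p - 2) * b ^ 2)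
        * (a + b) ^ (2 - p) := by
  rcases abs_le.mp ht with ⟨ht1, ht2⟩
  rcases eq_or_lt_of_le ha with rfl | ha'
  · -- a = 0
    have hb' : 0 < b := by linarith
    have ht0 : t = 0 := le_antisymm (by simpa using ht2) (by simpa using ht1)
    rw [ht0, Real.zero_rpow (by intro h; rw [sub_eq_zero] at h; linarith)]
    simp only [zero_add, zero_mul, mul_zero, sub_zero, zero_sub, neg_zero, add_zero]
    have : b ^ (p - 2) * b ^ 2 * b ^ (2 - p) = b ^ 2 := by
      rw [show b ^ (p-2) * b ^ 2 * b ^ (2-p) = b ^ (p-2) * b ^ (2-p) * b ^ 2 by ring,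
        ← Real.rpow_add hb', show p - 2 + (2 - p) = 0 by ring, Real.rpow_zero, one_mul]
    rw [this]
    nlinarith [sq_nonneg b]
  rcases eq_or_lt_of_le hb with rfl | hb'
  · -- b = 0
    have ht0 : t = 0 := le_antisymm (by simpa using ht2) (by simpa using ht1)
    rw [ht0, Real.zero_rpow (by intro h; rw [sub_eq_zero] at h; linarith)]
    simp only [add_zero, zero_mul, mul_zero, sub_zero, zero_add]
    have : a ^ (p - 2) * a ^ 2 * a ^ (2 - p) = a ^ 2 := by
      rw [show a ^ (p-2) * a ^ 2 * a ^ (2-p) = a ^ (p-2) * a ^ (2-p) * a ^ 2 by ring,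
        ← Real.rpow_add ha', show p - 2 + (2 - p) = 0 by ring, Real.rpow_zero, one_mul]
    rw [this]
    nlinarith [sq_nonneg a]
  -- both positive
  have hsa : a ^ (p - 2) * a = a ^ (p - 1) := by
    rw [show p - 1 = p - 2 + 1 by ring, Real.rpow_add_one ha'.ne']
  have hsa2 : a ^ (p - 2) * a ^ 2 = a ^ (p - 1) * a := by
    rw [← hsa]; ring
  have hsb : b ^ (p - 2) * b = b ^ (p - 1) := by
    rw [show p - 1 = p - 2 + 1 by ring, Real.rpow_add_one hb'.ne']
  have hsb2 : b ^ (p - 2) * b ^ 2 = b ^ (p - 1) * b := by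
    rw [← hsb]; ring
  set S : ℝ := (a ^ (p - 2) + b ^ (p - 2)) * (a + b) ^ (2 - p) with hS
  have hE2 : (p - 1) * (a + b) ^ 2 ≤ (a ^ (p - 1) + b ^ (p - 1)) * (a + b) * (a + b) ^ (2 - p) :=
    simon_E2 hp1 hp2 ha' hb'
  have hE1 : (p - 1) * (a - b) ^ 2 ≤ (a ^ (p - 1) - b ^ (p - 1)) * (a - b) * (a + b) ^ (2 - p) := by
    rcases le_total b a with hba | hba
    · exact simon_E1 hp1 hp2 ha' hb' hba
    · have := simon_E1 hp1 hp2 hb' ha' hba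
      rw [show a + b = b + a by ring] at *
      nlinarith [this]
  -- Rewrite endpoints in terms of the original expression
  have hEP1 : (p - 1) * (a ^ 2 - 2 * (a * b) + b ^ 2) ≤
      (a ^ (p - 2) * a ^ 2 - (a ^ (p - 2) + b ^ (p - 2)) * (a * b) + b ^ (p - 2) * b ^ 2)
        * (a + b) ^ (2 - p) := by
    have heq : a ^ (p - 2) * a ^ 2 - (a ^ (p - 2) + b ^ (p - 2)) * (a * b) + b ^ (p - 2) * b ^ 2
        = (a ^ (p - 1) - b ^ (p - 1)) * (a - b) := by
      rw [hsa2, hsb2, show (a ^ (p-2) + b ^ (p-2)) * (a*b)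
          = a ^ (p-2) * a * b + b ^ (p-2) * b * a by ring, hsa, hsb]
      ring
    rw [heq, show a ^ 2 - 2 * (a * b) + b ^ 2 = (a - b) ^ 2 by ring]
    exact hE1
  have hEP2 : (p - 1) * (a ^ 2 - 2 * (-(a * b)) + b ^ 2) ≤
      (a ^ (p - 2) * a ^ 2 - (a ^ (p - 2) + b ^ (p - 2)) * (-(a * b)) + b ^ (p - 2) * b ^ 2)
        * (a + b) ^ (2 - p) := by
    have heq : a ^ (p - 2) * a ^ 2 - (a ^ (p - 2) + b ^ (p - 2)) * (-(a * b)) + b ^ (p - 2) * b ^ 2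
        = (a ^ (p - 1) + b ^ (p - 1)) * (a + b) := by
      rw [hsa2, hsb2, show (a ^ (p-2) + b ^ (p-2)) * (-(a*b))
          = -(a ^ (p-2) * a * b + b ^ (p-2) * b * a) by ring, hsa, hsb]
      ring
    rw [heq, show a ^ 2 - 2 * (-(a * b)) + b ^ 2 = (a + b) ^ 2 by ring]
    exact hE2
  -- Affine interpolation in t
  have hexp : ∀ s : ℝ,
      (a ^ (p - 2) * a ^ 2 - (a ^ (p - 2) + b ^ (p - 2)) * s + b ^ (p - 2) * b ^ 2)
        * (a + b) ^ (2 - p)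
      = (a ^ (p - 2) * a ^ 2 + b ^ (p - 2) * b ^ 2) * (a + b) ^ (2 - p) - S * s := by
    intro s; rw [hS]; ring
  rw [hexp t]
  rcases le_total (2 * (p - 1)) S with hcase | hcase
  · rw [hexp (a * b)] at hEP1
    nlinarith [mul_nonneg (sub_nonneg.mpr hcase) (sub_nonneg.mpr ht2)]
  · rw [hexp (-(a * b))] at hEP2
    nlinarith [mul_nonneg (sub_nonneg.mpr hcase) (by linarith : (0:ℝ) ≤ t + a * b)]

/-- Simon's inequality, case `1 < p < 2`: there is `C = C(p, N) > 0` such that for all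
`x, y ∈ ℝ^N` not both zero,
`⟨|x|^{p-2} x - |y|^{p-2} y, x - y⟩ · (|x| + |y|)^{2-p} ≥ C |x - y|^2`. -/
theorem simon_inequality_subquadratic (N : ℕ) (p : ℝ) (hp1 : 1 < p) (hp2 : p < 2) :
    ∃ C : ℝ, 0 < C ∧ ∀ x y : EuclideanSpace ℝ (Fin N), (x ≠ 0 ∨ y ≠ 0) →
      C * ‖x - y‖ ^ (2 : ℝ) ≤
        (inner ℝ (‖x‖ ^ (p - 2) • x - ‖y‖ ^ (p - 2) • y) (x - y) : ℝ)
          * (‖x‖ + ‖y‖) ^ (2 - p) := by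
  refine ⟨p - 1, by linarith, fun x y h => ?_⟩
  have ha : 0 ≤ ‖x‖ := norm_nonneg x
  have hb : 0 ≤ ‖y‖ := norm_nonneg y
  have hab : 0 < ‖x‖ + ‖y‖ := by
    rcases h with h | h
    · have : 0 < ‖x‖ := norm_pos_iff.mpr h
      linarith
    · have : 0 < ‖y‖ := norm_pos_iff.mpr h
      linarith
  have ht : |(inner ℝ x y : ℝ)| ≤ ‖x‖ * ‖y‖ := abs_real_inner_le_norm x y
  have hinner : (inner ℝ (‖x‖ ^ (p - 2) • x - ‖y‖ ^ (p - 2) • y) (x - y) : ℝ)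
      = ‖x‖ ^ (p - 2) * ‖x‖ ^ 2 - (‖x‖ ^ (p - 2) + ‖y‖ ^ (p - 2)) * (inner ℝ x y : ℝ)
          + ‖y‖ ^ (p - 2) * ‖y‖ ^ 2 := by
    rw [inner_sub_left, inner_sub_right, inner_sub_right, real_inner_smul_left,
      real_inner_smul_left, real_inner_smul_left, real_inner_smul_left,
      real_inner_self_eq_norm_sq, real_inner_self_eq_norm_sq, real_inner_comm y x]
    ring
  have hnorm : ‖x - y‖ ^ (2 : ℝ) = ‖x‖ ^ 2 - 2 * (inner ℝ x y : ℝ) + ‖y‖ ^ 2 := by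
    rw [show ((2:ℝ) = ((2:ℕ):ℝ)) by norm_num, Real.rpow_natCast, norm_sub_sq_real]
    ring
  rw [hinner, hnorm]
  exact simon_key hp1 hp2 ha hb hab ht
end

section
/- Let F : ℝ → ℝ be locally Lipschitz, self-similar with factor γ > 1 and power σ = (N-2m)/m where 2m < N, and F(0) = 0; set m* = mN/(N-2m) and assume m* > 1. Then for every M ∈ ℕ there is a constant C(M) > 0 such that for all real numbers a_1, …, a_M, |F(a_1 + ⋯ + a_M) − (F(a_1) + ⋯ + F(a_M))| ≤ C(M) · Σ_{n ≠ i} |a_n|^{m*−1} |a_i|. -/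
open Real Set Finset

lemma locallyLipschitz_compact_bound (F : ℝ → ℝ) (hlip : LocallyLipschitz F)
    {s : Set ℝ} (hs : IsCompact s) :
    ∃ K : ℝ, 0 < K ∧ ∀ x ∈ s, ∀ y ∈ s, |F x - F y| ≤ K * |x - y| := by
  -- open cover by sets on which F is Lipschitz
  have hcov : ∀ x : ℝ, ∃ U : Set ℝ, IsOpen U ∧ x ∈ U ∧ ∃ K : NNReal, LipschitzOnWith K F U := by
    intro x
    obtain ⟨K, t, ht, hK⟩ := hlip x
    obtain ⟨U, hUt, hU, hxU⟩ := mem_nhds_iff.1 ht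
    exact ⟨U, hU, hxU, K, hK.mono hUt⟩
  choose U hUopen hUmem KU hKU using hcov
  -- finite subcover
  obtain ⟨T, -, hTcov⟩ := hs.elim_nhds_subcover U (fun x _ => (hUopen x).mem_nhds (hUmem x))
  -- Lebesgue number
  have hTcov' : s ⊆ ⋃ i : T, U (i : ℝ) := by
    intro z hz
    obtain ⟨x, hxT, hxU⟩ := Set.mem_iUnion₂.1 (hTcov hz)
    exact Set.mem_iUnion.2 ⟨⟨x, hxT⟩, hxU⟩
  obtain ⟨δ, hδ, hleb⟩ := lebesgue_number_lemma_of_metric hs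
    (c := fun x : T => U x) (fun x => hUopen x) hTcov'
  -- bound of F on s
  obtain ⟨B, hB⟩ := hs.exists_bound_of_continuousOn hlip.continuous.continuousOn
  -- max Lipschitz constant
  set K0 : NNReal := T.sup (fun x => KU x) with hK0
  have hKle : ∀ x ∈ T, (KU x : ℝ) ≤ (K0 : ℝ) := fun x hx => by
    exact_mod_cast Finset.le_sup (f := fun x => KU x) hx
  refine ⟨(K0 : ℝ) + 2 * (|B| + 1) / δ + 1, by positivity, ?_⟩
  intro x hx y hy
  rcases lt_or_ge (dist x y) δ with h | h
  · obtain ⟨i, hi⟩ := hleb x hx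
    have hxi : x ∈ U i := hi (Metric.mem_ball_self hδ)
    have hyi : y ∈ U i := hi (by simpa [Metric.mem_ball, dist_comm] using h)
    have := (hKU i).dist_le_mul x hxi y hyi
    have hdist : |F x - F y| ≤ (KU i : ℝ) * |x - y| := by
      simpa [Real.dist_eq] using this
    have hKi : (KU (i : ℝ) : ℝ) ≤ (K0 : ℝ) := hKle i i.2
    have habs : (0:ℝ) ≤ |x - y| := abs_nonneg _
    nlinarith [abs_nonneg (F x - F y), abs_nonneg (x - y),
      mul_le_mul_of_nonneg_right hKi habs,
      mul_nonneg (div_nonneg (by positivity : (0:ℝ) ≤ 2 * (|B| + 1)) hδ.le) habs]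
  · have hFx : |F x| ≤ |B| := (hB x hx).trans (le_abs_self B)
    have hFy : |F y| ≤ |B| := (hB y hy).trans (le_abs_self B)
    have h1 : |F x - F y| ≤ 2 * (|B| + 1) := by
      have := abs_sub (F x) (F y)
      calc |F x - F y| ≤ |F x| + |F y| := abs_sub _ _
        _ ≤ 2 * (|B| + 1) := by linarith
    have h2 : δ ≤ |x - y| := by simpa [Real.dist_eq] using h
    have h3 : 2 * (|B| + 1) / δ * δ ≤ 2 * (|B| + 1) / δ * |x - y| := by
      apply mul_le_mul_of_nonneg_left h2 (by positivity)
    rw [div_mul_cancel₀] at h3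
    · nlinarith [abs_nonneg (x - y), NNReal.coe_nonneg K0]
    · exact hδ.ne'

lemma sum_rpow_le_card_rpow_mul {M : ℕ} (q : ℝ) (hq : 0 < q) (f : Fin M → ℝ)
    (hf : ∀ i, 0 ≤ f i) :
    (∑ i, f i) ^ q ≤ (M : ℝ) ^ q * ∑ i, (f i) ^ q := by
  rcases Nat.eq_zero_or_pos M with hM | hM
  · subst hM
    simp [Real.zero_rpow hq.ne']
  · obtain ⟨i₀, -, hi₀⟩ := Finset.exists_max_image Finset.univ f ⟨⟨0, hM⟩, Finset.mem_univ _⟩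
    have h1 : ∑ i, f i ≤ (M : ℝ) * f i₀ := by
      calc ∑ i, f i ≤ ∑ _i : Fin M, f i₀ := Finset.sum_le_sum fun i _ => hi₀ i (mem_univ _)
        _ = (M : ℝ) * f i₀ := by simp [mul_comm]
    have h2 : (∑ i, f i) ^ q ≤ ((M : ℝ) * f i₀) ^ q :=
      Real.rpow_le_rpow (Finset.sum_nonneg fun i _ => hf i) h1 hq.le
    have h3 : ((M : ℝ) * f i₀) ^ q = (M : ℝ) ^ q * (f i₀) ^ q :=
      Real.mul_rpow (by positivity) (hf i₀)
    have h4 : (f i₀) ^ q ≤ ∑ i, (f i) ^ q :=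
      Finset.single_le_sum (f := fun i => (f i) ^ q) (fun i _ => Real.rpow_nonneg (hf i) q) (mem_univ i₀)
    calc (∑ i, f i) ^ q ≤ (M : ℝ) ^ q * (f i₀) ^ q := by rw [← h3]; exact h2
      _ ≤ (M : ℝ) ^ q * ∑ i, (f i) ^ q := by
        apply mul_le_mul_of_nonneg_left h4 (by positivity)

lemma key_diff_bound (γ σ p : ℝ) (hσ : 0 < σ) (hγ : 1 < γ) (hp : 1 < p) (F : ℝ → ℝ)
    (hss : ∀ (j : ℤ) (t : ℝ), F t = γ ^ (-(σ * p) * (j : ℝ)) * F (γ ^ (σ * (j : ℝ)) * t))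
    (K : ℝ) (hK : 0 < K)
    (hlipb : ∀ x ∈ Icc (-(γ ^ σ)) (γ ^ σ), ∀ y ∈ Icc (-(γ ^ σ)) (γ ^ σ),
      |F x - F y| ≤ K * |x - y|) :
    ∀ t s : ℝ, |s| ≤ |t| → |F t - F s| ≤ K * |t| ^ (p - 1) * |t - s| := by
  intro t s hts
  have hγ0 : (0:ℝ) < γ := lt_trans one_pos hγ
  set b : ℝ := γ ^ σ with hb
  have hb1 : 1 < b := Real.one_lt_rpow_iff_of_pos hγ0 |>.2 (Or.inl ⟨hγ, hσ⟩)
  have hb0 : 0 < b := lt_trans one_pos hb1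
  rcases eq_or_ne t 0 with ht0 | ht0
  · have hs0 : s = 0 := by
      have := hts; rw [ht0] at this; simpa [abs_nonpos_iff] using this
    simp [ht0, hs0]
  · have ht : 0 < |t| := abs_pos.2 ht0
    obtain ⟨n, hn1, hn2⟩ := exists_mem_Ico_zpow ht hb1
    set c : ℝ := b ^ (-n) with hc
    have hc0 : 0 < c := zpow_pos hb0 _
    have hct1 : 1 ≤ c * |t| := by
      rw [hc, zpow_neg, inv_mul_eq_div]
      exact (one_le_div (zpow_pos hb0 n)).2 hn1
    have hctb : c * |t| ≤ b := by
      rw [hc, zpow_neg]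
      have : |t| ≤ b ^ (n + 1) := le_of_lt hn2
      calc (b ^ n)⁻¹ * |t| ≤ (b ^ n)⁻¹ * b ^ (n + 1) := by
            exact mul_le_mul_of_nonneg_left this (by positivity)
        _ = b := by
            rw [zpow_add₀ hb0.ne' n 1]
            field_simp
    -- rewrite the scaling hypothesis with j = -n
    have hgamma : γ ^ (σ * ((-n : ℤ) : ℝ)) = c := by
      rw [Real.rpow_mul hγ0.le, Real.rpow_intCast]
    have hgammaN : γ ^ (-(σ * p) * ((-n : ℤ) : ℝ)) = (c ^ p)⁻¹ := by
      have : -(σ * p) * ((-n : ℤ) : ℝ) = (σ * ((-n : ℤ) : ℝ)) * (-p) := by ring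
      rw [this, Real.rpow_mul hγ0.le, hgamma, Real.rpow_neg hc0.le]
    have hFt := hss (-n) t
    have hFs := hss (-n) s
    rw [hgamma, hgammaN] at hFt hFs
    have hmemt : c * t ∈ Icc (-b) b := by
      have habs : |c * t| ≤ b := by rw [abs_mul, abs_of_pos hc0]; exact hctb
      exact abs_le.1 habs
    have hmems : c * s ∈ Icc (-b) b := by
      have habs : |c * s| ≤ b := by
        rw [abs_mul, abs_of_pos hc0]
        calc c * |s| ≤ c * |t| := mul_le_mul_of_nonneg_left hts hc0.le
          _ ≤ b := hctb
      exact abs_le.1 habs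
    have hlocal := hlipb (c * t) hmemt (c * s) hmems
    have hdiff : F t - F s = (c ^ p)⁻¹ * (F (c * t) - F (c * s)) := by
      rw [hFt, hFs]; ring
    have hcp : 0 < c ^ p := Real.rpow_pos_of_pos hc0 p
    have : |F t - F s| = (c ^ p)⁻¹ * |F (c * t) - F (c * s)| := by
      rw [hdiff, abs_mul, abs_of_pos (inv_pos.2 hcp)]
    rw [this]
    have hcts : |c * t - c * s| = c * |t - s| := by
      rw [← mul_sub, abs_mul, abs_of_pos hc0]
    have step1 : (c ^ p)⁻¹ * |F (c * t) - F (c * s)| ≤ (c ^ p)⁻¹ * (K * (c * |t - s|)) := by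
      apply mul_le_mul_of_nonneg_left _ (inv_pos.2 hcp).le
      rw [← hcts]; exact hlocal
    refine step1.trans ?_
    -- (c^p)⁻¹ * K * c = K * c^(1-p) ≤ K * |t|^(p-1)
    have hcid : (c ^ p)⁻¹ * c = c ^ (1 - p) := by
      rw [Real.rpow_sub hc0, Real.rpow_one]
      field_simp
    have hcle : c ^ (1 - p) ≤ |t| ^ (p - 1) := by
      have hinvle : |t|⁻¹ ≤ c := le_of_mul_le_mul_right
        (by rw [inv_mul_cancel₀ ht.ne']; exact hct1) ht
      have := Real.rpow_le_rpow_of_nonpos (by positivity : (0:ℝ) < |t|⁻¹) hinvle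
        (by linarith : 1 - p ≤ 0)
      calc c ^ (1 - p) ≤ (|t|⁻¹) ^ (1 - p) := this
        _ = |t| ^ (p - 1) := by
          rw [← Real.rpow_neg_one |t|, ← Real.rpow_mul (abs_nonneg t)]
          congr 1
          ring
    calc (c ^ p)⁻¹ * (K * (c * |t - s|)) = K * ((c ^ p)⁻¹ * c) * |t - s| := by ring
      _ = K * c ^ (1 - p) * |t - s| := by rw [hcid]
      _ ≤ K * |t| ^ (p - 1) * |t - s| := by
          apply mul_le_mul_of_nonneg_right _ (abs_nonneg _)
          exact mul_le_mul_of_nonneg_left hcle hK.le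

lemma pair_almost_additive (p K : ℝ) (hp : 1 < p) (hK : 0 < K) (F : ℝ → ℝ) (hF0 : F 0 = 0)
    (hB : ∀ t s : ℝ, |s| ≤ |t| → |F t - F s| ≤ K * |t| ^ (p - 1) * |t - s|) :
    ∀ x y : ℝ, |F (x + y) - F x - F y| ≤
      (K * 2 ^ (p - 1) + K) * (|x| ^ (p - 1) * |y| + |y| ^ (p - 1) * |x|) := by
  have hq : 0 ≤ p - 1 := by linarith
  have h2q : (1:ℝ) ≤ 2 ^ (p - 1) := by
    have h := Real.rpow_le_rpow (by norm_num : (0:ℝ) ≤ 1) (by norm_num : (1:ℝ) ≤ 2) hq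
    rwa [Real.one_rpow] at h
  have h2q0 : (0:ℝ) < 2 ^ (p - 1) := lt_of_lt_of_le one_pos h2q
  have key : ∀ x y : ℝ, |y| ≤ |x| → |F (x + y) - F x - F y| ≤
      K * 2 ^ (p - 1) * (|x| ^ (p - 1) * |y|) + K * (|y| ^ (p - 1) * |x|) := by
    intro x y hyx
    have hFy : |F y| ≤ K * |y| ^ (p - 1) * |y| := by
      have := hB y 0 (by simp)
      simpa [hF0] using this
    have part2 : |F y| ≤ K * (|y| ^ (p - 1) * |x|) := by
      refine hFy.trans ?_
      rw [mul_assoc]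
      apply mul_le_mul_of_nonneg_left _ hK.le
      exact mul_le_mul_of_nonneg_left hyx (by positivity)
    have part1 : |F (x + y) - F x| ≤ K * 2 ^ (p - 1) * (|x| ^ (p - 1) * |y|) := by
      have h2x : |x + y| ≤ 2 * |x| := by
        calc |x + y| ≤ |x| + |y| := abs_add_le x y
          _ ≤ 2 * |x| := by linarith
      have hpow : |x + y| ^ (p - 1) ≤ 2 ^ (p - 1) * |x| ^ (p - 1) := by
        calc |x + y| ^ (p - 1) ≤ (2 * |x|) ^ (p - 1) :=
              Real.rpow_le_rpow (abs_nonneg _) h2x hq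
          _ = 2 ^ (p - 1) * |x| ^ (p - 1) := Real.mul_rpow (by norm_num) (abs_nonneg x)
      rcases le_total |x| |x + y| with h | h
      · have hb := hB (x + y) x h
        have e : x + y - x = y := by ring
        rw [e] at hb
        calc |F (x + y) - F x| ≤ K * |x + y| ^ (p - 1) * |y| := hb
          _ ≤ K * (2 ^ (p - 1) * |x| ^ (p - 1)) * |y| := by
              apply mul_le_mul_of_nonneg_right _ (abs_nonneg y)
              exact mul_le_mul_of_nonneg_left hpow hK.le
          _ = K * 2 ^ (p - 1) * (|x| ^ (p - 1) * |y|) := by ring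
      · have hb := hB x (x + y) h
        have e : |x - (x + y)| = |y| := by
          rw [show x - (x + y) = -y by ring, abs_neg]
        rw [e, abs_sub_comm] at hb
        calc |F (x + y) - F x| ≤ K * |x| ^ (p - 1) * |y| := hb
          _ ≤ K * 2 ^ (p - 1) * (|x| ^ (p - 1) * |y|) := by
              nlinarith [mul_nonneg (mul_nonneg (by linarith : (0:ℝ) ≤ 2 ^ (p - 1) - 1) hK.le)
                (mul_nonneg (Real.rpow_nonneg (abs_nonneg x) (p - 1)) (abs_nonneg y))]
    calc |F (x + y) - F x - F y| ≤ |F (x + y) - F x| + |F y| := by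
          have : F (x + y) - F x - F y = (F (x + y) - F x) + (-(F y)) := by ring
          rw [this]
          exact (abs_add_le _ _).trans (by rw [abs_neg])
      _ ≤ K * 2 ^ (p - 1) * (|x| ^ (p - 1) * |y|) + K * (|y| ^ (p - 1) * |x|) :=
          add_le_add part1 part2
  intro x y
  have hXnn : (0:ℝ) ≤ |x| ^ (p - 1) * |y| := by positivity
  have hYnn : (0:ℝ) ≤ |y| ^ (p - 1) * |x| := by positivity
  rcases le_total |y| |x| with h | h
  · refine (key x y h).trans ?_
    nlinarith [mul_nonneg (mul_nonneg hK.le h2q0.le) hYnn, mul_nonneg hK.le hXnn]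
  · have e : F (x + y) - F x - F y = F (y + x) - F y - F x := by rw [add_comm x y]; ring
    rw [e]
    refine (key y x h).trans ?_
    nlinarith [mul_nonneg (mul_nonneg hK.le h2q0.le) hXnn, mul_nonneg hK.le hYnn]


lemma cross_sum_split {M : ℕ} (q : ℝ) (a : Fin (M + 1) → ℝ) :
    (∑ n : Fin (M + 1), ∑ i : Fin (M + 1), (if n ≠ i then |a n| ^ q * |a i| else 0))
      = (∑ n : Fin M, ∑ i : Fin M,
          (if n ≠ i then |a n.castSucc| ^ q * |a i.castSucc| else 0))
        + ((∑ n : Fin M, |a n.castSucc| ^ q * |a (Fin.last M)|)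
          + (∑ i : Fin M, |a (Fin.last M)| ^ q * |a i.castSucc|)) := by
  have h1 : ∀ n : Fin M,
      (∑ i : Fin (M + 1), (if n.castSucc ≠ i then |a n.castSucc| ^ q * |a i| else 0))
        = (∑ i : Fin M, (if n ≠ i then |a n.castSucc| ^ q * |a i.castSucc| else 0))
          + |a n.castSucc| ^ q * |a (Fin.last M)| := by
    intro n
    rw [Fin.sum_univ_castSucc
      (f := fun i : Fin (M + 1) => (if n.castSucc ≠ i then |a n.castSucc| ^ q * |a i| else 0))]
    rw [if_pos (Fin.castSucc_lt_last n).ne]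
    congr 1
    refine Finset.sum_congr rfl fun i _ => ?_
    by_cases h : n = i
    · subst h; simp
    · rw [if_pos (fun hc => h (Fin.castSucc_injective M hc)), if_pos h]
  have h2 : (∑ i : Fin (M + 1), (if Fin.last M ≠ i then |a (Fin.last M)| ^ q * |a i| else 0))
      = ∑ i : Fin M, |a (Fin.last M)| ^ q * |a i.castSucc| := by
    rw [Fin.sum_univ_castSucc
      (f := fun i : Fin (M + 1) => (if Fin.last M ≠ i then |a (Fin.last M)| ^ q * |a i| else 0))]
    rw [if_neg (by simp), add_zero]
    refine Finset.sum_congr rfl fun i _ => ?_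
    rw [if_pos (Fin.castSucc_lt_last i).ne']
  rw [Fin.sum_univ_castSucc
    (f := fun n : Fin (M + 1) => ∑ i : Fin (M + 1), (if n ≠ i then |a n| ^ q * |a i| else 0))]
  rw [h2, Finset.sum_congr rfl (fun n _ => h1 n), Finset.sum_add_distrib]
  ring

/-- For a locally Lipschitz self-similar function `F` (factor `γ > 1`, power `σ = (N-2m)/m`,
`2m < N`, `F(0) = 0`, `m* = mN/(N-2m) > 1`): for every `M` there is `C(M) > 0` such that for
all `a₁, …, a_M ∈ ℝ`,
`|F(a₁ + ⋯ + a_M) − Σ F(a_n)| ≤ C(M) Σ_{n ≠ i} |a_n|^{m*−1} |a_i|`. -/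
theorem selfSimilar_almost_additive (N : ℕ) (m γ : ℝ) (hm : 1 < m) (h2m : 2 * m < N)
    (hγ : 1 < γ) (F : ℝ → ℝ) (hlip : LocallyLipschitz F) (hF0 : F 0 = 0)
    (hss : ∀ (j : ℤ) (t : ℝ),
      F t = γ ^ (-(N : ℝ) * (j : ℝ)) * F (γ ^ (((N : ℝ) - 2 * m) / m * (j : ℝ)) * t))
    (hcrit : 1 < m * N / ((N : ℝ) - 2 * m)) :
    ∀ M : ℕ, ∃ C : ℝ, 0 < C ∧ ∀ a : Fin M → ℝ,
      |F (∑ n, a n) - ∑ n, F (a n)| ≤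
        C * ∑ n : Fin M, ∑ i : Fin M,
          (if n ≠ i then |a n| ^ (m * N / ((N : ℝ) - 2 * m) - 1) * |a i| else 0) := by
  have hm0 : (0:ℝ) < m := by linarith
  have hNm : (0:ℝ) < (N:ℝ) - 2 * m := by linarith
  set σ : ℝ := ((N : ℝ) - 2 * m) / m with hσdef
  set p : ℝ := m * N / ((N : ℝ) - 2 * m) with hpdef
  have hσ : 0 < σ := div_pos hNm hm0
  have hσp : σ * p = (N : ℝ) := by
    rw [hσdef, hpdef]; field_simp
  have hss' : ∀ (j : ℤ) (t : ℝ),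
      F t = γ ^ (-(σ * p) * (j : ℝ)) * F (γ ^ (σ * (j : ℝ)) * t) := by
    intro j t
    rw [hσp]
    exact hss j t
  obtain ⟨K, hK, hlipK⟩ := locallyLipschitz_compact_bound F hlip
    (isCompact_Icc (a := -(γ ^ σ)) (b := γ ^ σ))
  have hB := key_diff_bound γ σ p hσ hγ hcrit F hss' K hK hlipK
  have hpair := pair_almost_additive p K hcrit hK F hF0 hB
  have hq : 0 < p - 1 := by linarith
  set K2 : ℝ := K * 2 ^ (p - 1) + K with hK2def
  have hK2 : 0 < K2 := by
    have : (0:ℝ) < 2 ^ (p - 1) := Real.rpow_pos_of_pos two_pos _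
    positivity
  intro M
  induction M with
  | zero => exact ⟨1, one_pos, fun a => by simp [hF0]⟩
  | succ M IH =>
    obtain ⟨C, hC, hIH⟩ := IH
    have hMq : (0:ℝ) ≤ (M : ℝ) ^ (p - 1) := Real.rpow_nonneg (Nat.cast_nonneg M) _
    refine ⟨C + K2 * ((M : ℝ) ^ (p - 1) + 1) + 1, by positivity, ?_⟩
    intro a
    set x : ℝ := ∑ n : Fin M, a n.castSucc with hxdef
    set y : ℝ := a (Fin.last M) with hydef
    have hsum1 : ∑ n : Fin (M + 1), a n = x + y := Fin.sum_univ_castSucc a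
    have hsum2 : ∑ n : Fin (M + 1), F (a n) = (∑ n : Fin M, F (a n.castSucc)) + F y :=
      Fin.sum_univ_castSucc (fun n => F (a n))
    have hIH' := hIH (fun n => a n.castSucc)
    -- abbreviations for the three sums
    set SS : ℝ := ∑ n : Fin M, ∑ i : Fin M,
      (if n ≠ i then |a n.castSucc| ^ (p - 1) * |a i.castSucc| else 0) with hSdef
    set A : ℝ := ∑ n : Fin M, |a n.castSucc| ^ (p - 1) * |y| with hAdef
    set B : ℝ := ∑ i : Fin M, |y| ^ (p - 1) * |a i.castSucc| with hBdef
    have hSnn : 0 ≤ SS := by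
      rw [hSdef]
      refine Finset.sum_nonneg fun n _ => Finset.sum_nonneg fun i _ => ?_
      split
      · positivity
      · exact le_refl 0
    have hAnn : 0 ≤ A := by
      rw [hAdef]; exact Finset.sum_nonneg fun n _ => by positivity
    have hBnn : 0 ≤ B := by
      rw [hBdef]; exact Finset.sum_nonneg fun i _ => by positivity
    have habs_x : |x| ≤ ∑ n : Fin M, |a n.castSucc| := by
      rw [hxdef]; exact Finset.abs_sum_le_sum_abs _ _
    have hA : |x| ^ (p - 1) * |y| ≤ (M : ℝ) ^ (p - 1) * A := by
      have h1 : |x| ^ (p - 1) ≤ (∑ n : Fin M, |a n.castSucc|) ^ (p - 1) :=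
        Real.rpow_le_rpow (abs_nonneg _) habs_x hq.le
      have h2 : (∑ n : Fin M, |a n.castSucc|) ^ (p - 1)
          ≤ (M : ℝ) ^ (p - 1) * ∑ n : Fin M, |a n.castSucc| ^ (p - 1) :=
        sum_rpow_le_card_rpow_mul (p - 1) hq _ (fun i => abs_nonneg _)
      calc |x| ^ (p - 1) * |y|
          ≤ ((M : ℝ) ^ (p - 1) * ∑ n : Fin M, |a n.castSucc| ^ (p - 1)) * |y| :=
            mul_le_mul_of_nonneg_right (h1.trans h2) (abs_nonneg y)
        _ = (M : ℝ) ^ (p - 1) * A := by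
            rw [hAdef, mul_assoc, Finset.sum_mul]
    have hBineq : |y| ^ (p - 1) * |x| ≤ B := by
      rw [hBdef, ← Finset.mul_sum]
      exact mul_le_mul_of_nonneg_left habs_x (by positivity)
    have hRHS : (∑ n : Fin (M + 1), ∑ i : Fin (M + 1),
        (if n ≠ i then |a n| ^ (p - 1) * |a i| else 0)) = SS + (A + B) := by
      rw [cross_sum_split (p - 1) a, hSdef, hAdef, hBdef, hydef]
    rw [hRHS]
    have step : |F (∑ n : Fin (M + 1), a n) - ∑ n : Fin (M + 1), F (a n)|
        ≤ K2 * (|x| ^ (p - 1) * |y| + |y| ^ (p - 1) * |x|) + C * SS := by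
      have e : F (∑ n : Fin (M + 1), a n) - ∑ n : Fin (M + 1), F (a n)
          = (F (x + y) - F x - F y) + (F x - ∑ n : Fin M, F (a n.castSucc)) := by
        rw [hsum1, hsum2]; ring
      rw [e]
      refine (abs_add_le _ _).trans (add_le_add ?_ ?_)
      · exact hpair x y
      · exact hIH'
    refine step.trans ?_
    have e1 : K2 * (|x| ^ (p - 1) * |y|) ≤ K2 * ((M : ℝ) ^ (p - 1) * A) :=
      mul_le_mul_of_nonneg_left hA hK2.le
    have e2 : K2 * (|y| ^ (p - 1) * |x|) ≤ K2 * B :=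
      mul_le_mul_of_nonneg_left hBineq hK2.le
    have eL : K2 * (|x| ^ (p - 1) * |y| + |y| ^ (p - 1) * |x|)
        = K2 * (|x| ^ (p - 1) * |y|) + K2 * (|y| ^ (p - 1) * |x|) := by ring
    have expand : (C + K2 * ((M : ℝ) ^ (p - 1) + 1) + 1) * (SS + (A + B))
        = C * SS + C * A + C * B + K2 * ((M : ℝ) ^ (p - 1) * SS)
          + K2 * ((M : ℝ) ^ (p - 1) * A) + K2 * ((M : ℝ) ^ (p - 1) * B)
          + K2 * SS + K2 * A + K2 * B + SS + A + B := by ring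
    have nn1 : 0 ≤ C * A := mul_nonneg hC.le hAnn
    have nn2 : 0 ≤ C * B := mul_nonneg hC.le hBnn
    have nn3 : 0 ≤ K2 * ((M : ℝ) ^ (p - 1) * SS) := mul_nonneg hK2.le (mul_nonneg hMq hSnn)
    have nn4 : 0 ≤ K2 * ((M : ℝ) ^ (p - 1) * B) := mul_nonneg hK2.le (mul_nonneg hMq hBnn)
    have nn5 : 0 ≤ K2 * SS := mul_nonneg hK2.le hSnn
    have nn6 : 0 ≤ K2 * A := mul_nonneg hK2.le hAnn
    have nn7 : 0 ≤ K2 * B := mul_nonneg hK2.le hBnn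
    linarith [eL, e1, e2, expand, nn1, nn2, nn3, nn4, nn5, nn6, nn7, hSnn, hAnn, hBnn]
end

section
/- Let N > θ > 1 and let u ∈ C_c^∞(ℝ^N) be radially symmetric. Then there exists a constant C = C(N, θ) > 0, independent of u, such that |u(x)| ≤ C ‖∇u‖_{L^θ(ℝ^N)} |x|^{(θ−N)/θ} for all x ≠ 0. -/
open Real MeasureTheory

open Set Metric

/-- A function is in `ℒp` (for `p = ofReal p`) as soon as it is a.e. strongly measurable
and `|f|^p` is integrable. -/
lemma memLp_of_integrable_abs_rpow {f : ℝ → ℝ} {μ : Measure ℝ} {p : ℝ} (hp : 1 ≤ p)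
    (hm : AEStronglyMeasurable f μ) (hi : Integrable (fun x => |f x| ^ p) μ) :
    MemLp f (ENNReal.ofReal p) μ := by
  have hp0 : 0 < p := lt_of_lt_of_le one_pos hp
  refine (memLp_norm_rpow_iff (q := ENNReal.ofReal p) hm ?_ ?_).mp ?_
  · simp [ENNReal.ofReal_eq_zero, not_le, hp0]
  · exact ENNReal.ofReal_ne_top
  · rw [ENNReal.div_self (by simp [ENNReal.ofReal_eq_zero, not_le, hp0]) ENNReal.ofReal_ne_top,
      memLp_one_iff_integrable]
    simpa [Real.norm_eq_abs, ENNReal.toReal_ofReal hp0.le] using hi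

/-- the norm of the derivative of a radial function is radial. -/
lemma norm_fderiv_radial {N : ℕ} {u : EuclideanSpace ℝ (Fin N) → ℝ}
    (hu : ContDiff ℝ (⊤ : ℕ∞) u)
    (hrad : ∀ x y : EuclideanSpace ℝ (Fin N), ‖x‖ = ‖y‖ → u x = u y)
    {x y : EuclideanSpace ℝ (Fin N)} (h : ‖x‖ = ‖y‖) :
    ‖fderiv ℝ u x‖ = ‖fderiv ℝ u y‖ := by
  set R : EuclideanSpace ℝ (Fin N) ≃ₗᵢ[ℝ] EuclideanSpace ℝ (Fin N) :=
    Submodule.reflection (ℝ ∙ (x - y))ᗮ with hR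
  have hRx : R x = y := Submodule.reflection_sub h
  have hcomp : u ∘ R = u := by
    funext w
    exact hrad (R w) w (R.norm_map w)
  have hRder : HasFDerivAt (⇑R) (R.toLinearIsometry.toContinuousLinearMap) x :=
    R.toLinearIsometry.toContinuousLinearMap.hasFDerivAt
  have hud : HasFDerivAt u (fderiv ℝ u (R x)) (R x) :=
    (hu.differentiable (by simp) (R x)).hasFDerivAt
  have hc : HasFDerivAt (u ∘ ⇑R)
      ((fderiv ℝ u (R x)).comp R.toLinearIsometry.toContinuousLinearMap) x :=
    hud.comp x hRder
  rw [hcomp] at hc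
  rw [hc.fderiv, ← hRx]
  exact ContinuousLinearMap.opNorm_comp_linearIsometryEquiv _ R

/-- Strauss-type radial decay estimate: for `N > θ > 1` there is `C = C(N, θ) > 0` such
that every radially symmetric `u ∈ C_c^∞(ℝ^N)` satisfies
`|u(x)| ≤ C ‖∇u‖_{L^θ} |x|^{(θ−N)/θ}` for all `x ≠ 0`. -/
theorem radial_decay_estimate (N : ℕ) (θ : ℝ) (hθ : 1 < θ) (hθN : θ < N) :
    ∃ C : ℝ, 0 < C ∧ ∀ u : EuclideanSpace ℝ (Fin N) → ℝ,
      ContDiff ℝ (⊤ : ℕ∞) u → HasCompactSupport u →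
      (∀ x y : EuclideanSpace ℝ (Fin N), ‖x‖ = ‖y‖ → u x = u y) →
      ∀ x : EuclideanSpace ℝ (Fin N), x ≠ 0 →
        |u x| ≤ C * (∫ y : EuclideanSpace ℝ (Fin N), ‖fderiv ℝ u y‖ ^ θ) ^ (1 / θ)
          * ‖x‖ ^ ((θ - N) / θ) := by
  have hθ0 : (0:ℝ) < θ := lt_trans one_pos hθ
  have hθ1 : (0:ℝ) < θ - 1 := by linarith
  have hN1 : (1:ℝ) < N := lt_trans hθ hθN
  have hN0 : 0 < N := by exact_mod_cast (by linarith : (0:ℝ) < N)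
  -- the unit vector
  set e : EuclideanSpace ℝ (Fin N) := EuclideanSpace.single ⟨0, hN0⟩ (1:ℝ) with he_def
  have he : ‖e‖ = 1 := by simp [he_def]
  -- conjugate exponent
  set q : ℝ := θ / (θ - 1) with hq_def
  have hconj : θ.HolderConjugate q := Real.HolderConjugate.conjExponent hθ
  -- the constant
  set b : ℝ := (volume (ball (0:EuclideanSpace ℝ (Fin N)) 1)).toReal with hb_def
  have hb : 0 < b := by
    rw [hb_def]
    exact ENNReal.toReal_pos (measure_ball_pos volume 0 one_pos).ne' measure_ball_lt_top.ne
  set β : ℝ := ((N:ℝ) - 1) / (θ - 1) with hβ_def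
  have hβ1 : 1 < β := by
    rw [hβ_def, lt_div_iff₀ hθ1]; linarith
  refine ⟨((N:ℝ) * b) ^ (-(1/θ)) * (β - 1) ^ (-((θ-1)/θ)),
    mul_pos (Real.rpow_pos_of_pos (by positivity) _) (Real.rpow_pos_of_pos (by linarith) _), ?_⟩
  intro u hu hsupp hrad x hx
  set r : ℝ := ‖x‖ with hr_def
  have hr : 0 < r := by rwa [hr_def, norm_pos_iff]
  haveI : Nontrivial (EuclideanSpace ℝ (Fin N)) := nontrivial_of_ne x 0 hx
  -- the radial profile of the gradient norm
  set F : ℝ → ℝ := fun s => ‖fderiv ℝ u (s • e)‖ with hF_def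
  have hFnorm : ∀ y : EuclideanSpace ℝ (Fin N), ‖fderiv ℝ u y‖ = F ‖y‖ := by
    intro y
    exact norm_fderiv_radial hu hrad (by simp [norm_smul, he, abs_of_nonneg (norm_nonneg y)])
  -- the embedding s ↦ s • e
  have hisom : Isometry (fun s : ℝ => s • e) := by
    refine Isometry.of_dist_eq fun s t => ?_
    simp [dist_eq_norm, ← sub_smul, norm_smul, he]
  have hemb : Topology.IsClosedEmbedding (fun s : ℝ => s • e) := hisom.isClosedEmbedding
  have hsmul_cont : Continuous (fun s : ℝ => s • e) := hisom.continuous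
  -- continuity and compact support of F
  have hfderiv_cont : Continuous (fderiv ℝ u) := hu.continuous_fderiv (by simp)
  have hFc : Continuous F := by
    exact continuous_norm.comp (hfderiv_cont.comp hsmul_cont)
  have hFsupp : HasCompactSupport F := by
    have h1 : HasCompactSupport (fun s : ℝ => fderiv ℝ u (s • e)) :=
      (hsupp.fderiv ℝ).comp_isClosedEmbedding hemb
    exact h1.comp_left (g := fun T : EuclideanSpace ℝ (Fin N) →L[ℝ] ℝ => ‖T‖) norm_zero
  have hF0 : ∀ s, 0 ≤ F s := fun s => norm_nonneg _
  -- the radial profile of u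
  set g : ℝ → ℝ := fun s => u (s • e) with hg_def
  have hgx : u x = g r := by
    refine hrad x (r • e) ?_
    simp [norm_smul, he, abs_of_nonneg hr.le, hr_def]
  set d : ℝ → ℝ := fun s => (fderiv ℝ u (s • e)) e with hd_def
  have hg' : ∀ s : ℝ, HasDerivAt g (d s) s := by
    intro s
    have h1 : HasDerivAt (fun t : ℝ => t • e) e s := by
      simpa using (hasDerivAt_id s).smul_const e
    exact ((hu.differentiable (by simp) (s • e)).hasFDerivAt).comp_hasDerivAt s h1
  have hdc : Continuous d := by
    exact (ContinuousLinearMap.apply ℝ ℝ e).continuous.comp (hfderiv_cont.comp hsmul_cont)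
  have hdsupp : HasCompactSupport d := by
    have h1 : HasCompactSupport (fun s : ℝ => fderiv ℝ u (s • e)) :=
      (hsupp.fderiv ℝ).comp_isClosedEmbedding hemb
    exact h1.comp_left (g := fun T : EuclideanSpace ℝ (Fin N) →L[ℝ] ℝ => T e) rfl
  have hdint : IntegrableOn d (Ioi r) :=
    (hdc.integrable_of_hasCompactSupport hdsupp).integrableOn
  have hgsupp : HasCompactSupport g := hsupp.comp_isClosedEmbedding hemb
  have hgtendsto : Filter.Tendsto g Filter.atTop (nhds 0) := by
    obtain ⟨R, hR⟩ := hgsupp.isBounded.subset_closedBall 0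
    refine Filter.Tendsto.congr' ?_ tendsto_const_nhds
    filter_upwards [Filter.eventually_gt_atTop R] with s hs
    by_contra h
    have : s ∈ tsupport g := subset_tsupport g (by simpa using fun hh => h hh.symm)
    have := hR this
    simp only [Metric.mem_closedBall, Real.dist_eq, sub_zero] at this
    have : s ≤ R := (abs_le.1 this).2
    linarith
  -- FTC
  have hftc : ∫ s in Ioi r, d s = 0 - g r :=
    integral_Ioi_of_hasDerivAt_of_tendsto
      ((hu.continuous.comp hsmul_cont).continuousWithinAt)
      (fun s _ => hg' s) hdint hgtendsto
  have hFint : IntegrableOn F (Ioi r) :=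
    (hFc.integrable_of_hasCompactSupport hFsupp).integrableOn
  have step1 : |u x| ≤ ∫ s in Ioi r, F s := by
    rw [hgx]
    have h1 : |g r| = |∫ s in Ioi r, d s| := by rw [hftc]; rw [zero_sub, abs_neg]
    rw [h1]
    calc |∫ s in Ioi r, d s| ≤ ∫ s in Ioi r, |d s| := by
          simpa [Real.norm_eq_abs] using
            norm_integral_le_integral_norm (μ := volume.restrict (Ioi r)) d
      _ ≤ ∫ s in Ioi r, F s := by
          refine integral_mono_ae hdint.norm hFint ?_
          filter_upwards with s
          have := (fderiv ℝ u (s • e)).le_opNorm e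
          simpa [Real.norm_eq_abs, he, hF_def] using this
  -- the two Hölder factors
  set a : ℝ := ((N:ℝ) - 1) / θ with ha_def
  set f₁ : ℝ → ℝ := fun s => F s * s ^ a with hf₁_def
  set f₂ : ℝ → ℝ := fun s => s ^ (-a) with hf₂_def
  -- V: the spherical integrand
  set V : ℝ → ℝ := fun s => F s ^ θ * s ^ (N - 1) with hV_def
  have hVc : Continuous V := by
    exact (hFc.rpow_const (fun s => Or.inr hθ0.le)).mul (continuous_pow (N-1))
  have hVsupp : HasCompactSupport V := by
    refine HasCompactSupport.intro (K := tsupport F) hFsupp ?_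
    intro s hs
    have : F s = 0 := image_eq_zero_of_notMem_tsupport hs
    simp [hV_def, this, Real.zero_rpow hθ0.ne']
  have hVint0 : IntegrableOn V (Ioi 0) :=
    (hVc.integrable_of_hasCompactSupport hVsupp).integrableOn
  have hVintr : IntegrableOn V (Ioi r) :=
    (hVc.integrable_of_hasCompactSupport hVsupp).integrableOn
  have hV0 : ∀ s : ℝ, 0 ≤ s → 0 ≤ V s := by
    intro s hs
    have h1 := hF0 s
    have h2 : 0 ≤ F s ^ θ := Real.rpow_nonneg h1 θ
    positivity
  have ha_mul : a * θ = (N:ℝ) - 1 := div_mul_cancel₀ _ hθ0.ne'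
  have hNcast : ((N:ℝ) - 1) = ((N - 1 : ℕ) : ℝ) := by
    push_cast [Nat.cast_sub hN0]
    ring
  have hf₁V : ∀ s : ℝ, 0 < s → f₁ s ^ θ = V s := by
    intro s hs
    rw [hf₁_def, hV_def]
    simp only []
    rw [Real.mul_rpow (hF0 s) (Real.rpow_nonneg hs.le a), ← Real.rpow_natCast s (N-1),
      ← hNcast, ← Real.rpow_mul hs.le, ha_mul]
  have hf₁nonneg : ∀ s : ℝ, 0 < s → 0 ≤ f₁ s := by
    intro s hs
    have h1 := hF0 s
    have h2 : 0 ≤ s ^ a := Real.rpow_nonneg hs.le a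
    exact mul_nonneg h1 h2
  have haq : a * q = β := by
    rw [ha_def, hq_def, hβ_def]
    field_simp
  have hf₂pow : ∀ s : ℝ, 0 < s → f₂ s ^ q = s ^ (-β) := by
    intro s hs
    rw [hf₂_def]
    simp only []
    rw [← Real.rpow_mul hs.le, neg_mul, haq]
  -- Memℒp facts
  have hf₁m : AEStronglyMeasurable f₁ (volume.restrict (Ioi r)) :=
    (hFc.measurable.mul (measurable_id.pow measurable_const)).aestronglyMeasurable
  have hf₂m : AEStronglyMeasurable f₂ (volume.restrict (Ioi r)) :=
    (measurable_id.pow (measurable_const : Measurable fun _ : ℝ => -a)).aestronglyMeasurable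
  have hmem₁ : MemLp f₁ (ENNReal.ofReal θ) (volume.restrict (Ioi r)) := by
    refine memLp_of_integrable_abs_rpow hθ.le hf₁m ?_
    refine hVintr.congr ?_
    filter_upwards [ae_restrict_mem measurableSet_Ioi] with s hs
    have hs0 : (0:ℝ) < s := lt_trans hr hs
    rw [abs_of_nonneg (hf₁nonneg s hs0), hf₁V s hs0]
  have hmem₂ : MemLp f₂ (ENNReal.ofReal q) (volume.restrict (Ioi r)) := by
    refine memLp_of_integrable_abs_rpow hconj.symm.lt.le hf₂m ?_
    have hint : IntegrableOn (fun s : ℝ => s ^ (-β)) (Ioi r) :=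
      integrableOn_Ioi_rpow_of_lt (by linarith) hr
    refine hint.congr ?_
    filter_upwards [ae_restrict_mem measurableSet_Ioi] with s hs
    have hs0 : (0:ℝ) < s := lt_trans hr hs
    rw [abs_of_nonneg (Real.rpow_nonneg hs0.le (-a)), hf₂pow s hs0]
  -- Hölder
  have hHolder : ∫ s in Ioi r, f₁ s * f₂ s ≤
      (∫ s in Ioi r, f₁ s ^ θ) ^ (1/θ) * (∫ s in Ioi r, f₂ s ^ q) ^ (1/q) := by
    refine integral_mul_le_Lp_mul_Lq_of_nonneg hconj ?_ ?_ hmem₁ hmem₂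
    · filter_upwards [ae_restrict_mem measurableSet_Ioi] with s hs
      exact hf₁nonneg s (lt_trans hr hs)
    · filter_upwards [ae_restrict_mem measurableSet_Ioi] with s hs
      exact Real.rpow_nonneg (lt_trans hr hs).le (-a)
  have hFf : ∫ s in Ioi r, F s = ∫ s in Ioi r, f₁ s * f₂ s := by
    refine integral_congr_ae ?_
    filter_upwards [ae_restrict_mem measurableSet_Ioi] with s hs
    have hs0 : (0:ℝ) < s := lt_trans hr hs
    rw [hf₁_def, hf₂_def]
    simp only []
    rw [mul_assoc, ← Real.rpow_add hs0, add_neg_cancel, Real.rpow_zero, mul_one]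
  -- the first Hölder factor
  have hA_eq : ∫ s in Ioi r, f₁ s ^ θ = ∫ s in Ioi r, V s := by
    refine integral_congr_ae ?_
    filter_upwards [ae_restrict_mem measurableSet_Ioi] with s hs
    exact hf₁V s (lt_trans hr hs)
  have hA_le : ∫ s in Ioi r, V s ≤ ∫ s in Ioi 0, V s := by
    refine setIntegral_mono_set hVint0 ?_ (HasSubset.Subset.eventuallyLE (Ioi_subset_Ioi hr.le))
    filter_upwards [ae_restrict_mem measurableSet_Ioi] with s hs
    exact hV0 s (le_of_lt hs)
  -- the second Hölder factor
  have hB_val : ∫ s in Ioi r, f₂ s ^ q = r ^ (1 - β) / (β - 1) := by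
    have h1 : ∫ s in Ioi r, f₂ s ^ q = ∫ s in Ioi r, s ^ (-β) := by
      refine integral_congr_ae ?_
      filter_upwards [ae_restrict_mem measurableSet_Ioi] with s hs
      exact hf₂pow s (lt_trans hr hs)
    rw [h1, integral_Ioi_rpow_of_lt (by linarith) hr]
    rw [show -β + 1 = 1 - β by ring]
    rw [div_eq_div_iff (by linarith) (by linarith)]
    ring
  -- spherical coordinates
  have hI : ∫ y : EuclideanSpace ℝ (Fin N), ‖fderiv ℝ u y‖ ^ θ
      = (N:ℝ) * b * ∫ s in Ioi 0, V s := by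
    have h1 : ∫ y : EuclideanSpace ℝ (Fin N), ‖fderiv ℝ u y‖ ^ θ
        = ∫ y : EuclideanSpace ℝ (Fin N), (fun t => F t ^ θ) ‖y‖ := by
      refine integral_congr_ae (Filter.Eventually.of_forall fun y => ?_)
      simp only [hFnorm y]
    rw [h1, MeasureTheory.integral_fun_norm_addHaar volume (fun t => F t ^ θ)]
    simp only [finrank_euclideanSpace_fin, nsmul_eq_mul, smul_eq_mul]
    rw [hb_def]
    have h2 : ∫ s in Ioi (0:ℝ), s ^ (N-1) * F s ^ θ = ∫ s in Ioi (0:ℝ), V s := by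
      refine integral_congr_ae (Filter.Eventually.of_forall fun s => ?_)
      rw [hV_def]
      ring
    rw [h2, Measure.real]
    ring
  set I : ℝ := ∫ y : EuclideanSpace ℝ (Fin N), ‖fderiv ℝ u y‖ ^ θ with hI_def
  have hI0 : 0 ≤ I := integral_nonneg fun y => Real.rpow_nonneg (norm_nonneg _) θ
  set J : ℝ := ∫ s in Ioi (0:ℝ), V s with hJ_def
  have hJ0 : 0 ≤ J := setIntegral_nonneg measurableSet_Ioi fun s hs => hV0 s (le_of_lt hs)
  have hJI : J = I / ((N:ℝ) * b) := by
    rw [hI]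
    field_simp
  -- put everything together
  have hfinal : |u x| ≤ (I / ((N:ℝ) * b)) ^ (1/θ) * (r ^ (1-β) / (β-1)) ^ (1/q) := by
    calc |u x| ≤ ∫ s in Ioi r, F s := step1
      _ = ∫ s in Ioi r, f₁ s * f₂ s := hFf
      _ ≤ (∫ s in Ioi r, f₁ s ^ θ) ^ (1/θ) * (∫ s in Ioi r, f₂ s ^ q) ^ (1/q) := hHolder
      _ ≤ (I / ((N:ℝ) * b)) ^ (1/θ) * (r ^ (1-β) / (β-1)) ^ (1/q) := by
          rw [hB_val, ← hJI]
          refine mul_le_mul_of_nonneg_right ?_ (Real.rpow_nonneg (div_nonneg (Real.rpow_nonneg hr.le _) (by linarith)) _)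
          refine Real.rpow_le_rpow ?_ (le_trans (le_of_eq hA_eq) hA_le) (by positivity)
          rw [hA_eq]
          exact setIntegral_nonneg measurableSet_Ioi fun s hs => hV0 s (le_of_lt (lt_trans hr hs))
  have hq_inv : 1/q = (θ-1)/θ := by
    rw [hq_def, one_div_div]
  have hexp : (1-β) * (1/q) = (θ - N) / θ := by
    rw [hq_inv, hβ_def]
    field_simp
    ring
  have hsplit1 : (I / ((N:ℝ) * b)) ^ (1/θ) = ((N:ℝ) * b) ^ (-(1/θ)) * I ^ (1/θ) := by
    rw [Real.div_rpow hI0 (by positivity), Real.rpow_neg (by positivity)]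
    rw [div_eq_mul_inv, mul_comm]
  have hsplit2 : (r ^ (1-β) / (β-1)) ^ (1/q)
      = (β-1) ^ (-((θ-1)/θ)) * r ^ ((θ - N) / θ) := by
    rw [Real.div_rpow (Real.rpow_nonneg hr.le _) (by linarith),
      Real.rpow_neg (by linarith), ← Real.rpow_mul hr.le, hexp, hq_inv,
      div_eq_mul_inv, mul_comm]
  calc |u x| ≤ (I / ((N:ℝ) * b)) ^ (1/θ) * (r ^ (1-β) / (β-1)) ^ (1/q) := hfinal
    _ = ((N:ℝ) * b) ^ (-(1/θ)) * (β - 1) ^ (-((θ-1)/θ)) * I ^ (1/θ) * r ^ ((θ - N) / θ) := by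
        rw [hsplit1, hsplit2]
        ring
    _ = ((N:ℝ) * b) ^ (-(1/θ)) * (β - 1) ^ (-((θ-1)/θ))
        * (∫ y : EuclideanSpace ℝ (Fin N), ‖fderiv ℝ u y‖ ^ θ) ^ (1 / θ) * ‖x‖ ^ ((θ - ↑N) / θ) := by
        rw [hI_def, hr_def]
end

section
/- Let N ≥ 3, m > 1 with 2m < N, and λ ∈ ℝ with 0 ≤ λ < Λ^{1/m} where Λ = Λ_{N,m} is the sharp constant in the Rellich-Hardy inequality Λ ∫ |x|^{-2m} |u|^m dx ≤ ∫ |Δu|^m dx for u ∈ C_c^∞(ℝ^N). Then the quantity ‖u‖_λ := (∫_{ℝ^N} |−Δu − λ|x|^{-2} u|^m dx)^{1/m} satisfies: there exist constants c, C > 0 such that c ‖Δu‖_{L^m} ≤ ‖u‖_λ ≤ C ‖Δu‖_{L^m} for all u ∈ C_c^∞(ℝ^N) radial. -/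
open Real MeasureTheory

/-- The Laplacian of `u : ℝ^N → ℝ`, as the trace of the second derivative. -/
noncomputable def lap {N : ℕ} (u : EuclideanSpace ℝ (Fin N) → ℝ)
    (x : EuclideanSpace ℝ (Fin N)) : ℝ :=
  ∑ i : Fin N, iteratedFDeriv ℝ 2 u x ![EuclideanSpace.single i 1, EuclideanSpace.single i 1]

open Metric Set
open scoped ENNReal

variable {E : Type*} [NormedAddCommGroup E] [NormedSpace ℝ E] [FiniteDimensional ℝ E]
  [MeasurableSpace E] [BorelSpace E]

lemma finite_lintegral_rpow_ball (μ : Measure E) [μ.IsAddHaarMeasure] {a : ℝ} (ha : 0 < a)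
    (hna : a < Module.finrank ℝ E) :
    ∫⁻ x in ball (0 : E) 1, ENNReal.ofReal (‖x‖ ^ (-a)) ∂μ < ∞ := by
  have hmeas : Measurable fun x : E => ‖x‖ ^ (-a) := by fun_prop
  rw [lintegral_eq_lintegral_meas_le (μ.restrict (ball (0:E) 1))
    (Filter.Eventually.of_forall fun x => rpow_nonneg (norm_nonneg x) _) hmeas.aemeasurable]
  have key : ∫⁻ t in Ioi (0:ℝ), (μ.restrict (ball (0:E) 1)) {x | t ≤ ‖x‖ ^ (-a)}
      ≤ (∫⁻ t in Ioc (0:ℝ) 1, (μ.restrict (ball (0:E) 1)) {x | t ≤ ‖x‖ ^ (-a)})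
        + ∫⁻ t in Ioi (1:ℝ), (μ.restrict (ball (0:E) 1)) {x | t ≤ ‖x‖ ^ (-a)} := by
    refine le_trans (lintegral_mono_set Ioi_subset_Ioc_union_Ioi) (lintegral_union_le _ _ _)
  refine lt_of_le_of_lt key (ENNReal.add_lt_top.2 ⟨?_, ?_⟩)
  · calc ∫⁻ t in Ioc (0:ℝ) 1, (μ.restrict (ball (0:E) 1)) {x | t ≤ ‖x‖ ^ (-a)}
        ≤ ∫⁻ _t in Ioc (0:ℝ) 1, μ (ball (0:E) 1) := by
          refine lintegral_mono fun t => ?_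
          exact le_trans (measure_mono (subset_univ _)) (by rw [Measure.restrict_apply_univ])
      _ = μ (ball (0:E) 1) * volume (Ioc (0:ℝ) 1) := setLIntegral_const _ _
      _ < ∞ := ENNReal.mul_lt_top measure_ball_lt_top (by simp)
  · set n := Module.finrank ℝ E with hn
    have hbound : ∀ t ∈ Ioi (1:ℝ), (μ.restrict (ball (0:E) 1)) {x | t ≤ ‖x‖ ^ (-a)}
        ≤ ENNReal.ofReal (t ^ ((-a)⁻¹ * n)) * μ (ball (0:E) 1) := by
      intro t ht
      have ht1 : (1:ℝ) < t := ht
      have ht0 : (0:ℝ) < t := lt_trans one_pos ht1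
      have hsub : {x : E | t ≤ ‖x‖ ^ (-a)} ⊆ closedBall (0:E) (t ^ (-a)⁻¹) := by
        intro x hx
        simp only [mem_setOf_eq] at hx
        rcases eq_or_ne x 0 with rfl | hx0
        · exfalso
          rw [norm_zero, Real.zero_rpow (by linarith : -a ≠ 0)] at hx
          linarith
        · have hxn : (0:ℝ) < ‖x‖ := norm_pos_iff.mpr hx0
          rw [mem_closedBall_zero_iff]
          exact (Real.le_rpow_inv_iff_of_neg hxn ht0 (by linarith : -a < 0)).mpr hx
      calc (μ.restrict (ball (0:E) 1)) {x | t ≤ ‖x‖ ^ (-a)}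
          ≤ μ {x : E | t ≤ ‖x‖ ^ (-a)} := Measure.restrict_le_self _
        _ ≤ μ (closedBall (0:E) (t ^ (-a)⁻¹)) := measure_mono hsub
        _ = ENNReal.ofReal ((t ^ (-a)⁻¹) ^ n) * μ (ball 0 1) :=
            μ.addHaar_closedBall _ (rpow_nonneg ht0.le _)
        _ = ENNReal.ofReal (t ^ ((-a)⁻¹ * n)) * μ (ball 0 1) := by
            rw [← Real.rpow_natCast (t ^ (-a)⁻¹) n, ← Real.rpow_mul ht0.le]
    calc ∫⁻ t in Ioi (1:ℝ), (μ.restrict (ball (0:E) 1)) {x | t ≤ ‖x‖ ^ (-a)}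
        ≤ ∫⁻ t in Ioi (1:ℝ), ENNReal.ofReal (t ^ ((-a)⁻¹ * n)) * μ (ball (0:E) 1) := by
          refine setLIntegral_mono' measurableSet_Ioi hbound
      _ = (∫⁻ t in Ioi (1:ℝ), ENNReal.ofReal (t ^ ((-a)⁻¹ * n))) * μ (ball (0:E) 1) :=
          lintegral_mul_const' _ _ measure_ball_lt_top.ne
      _ < ∞ := by
          refine ENNReal.mul_lt_top ?_ measure_ball_lt_top
          refine IntegrableOn.setLIntegral_lt_top ?_
          refine integrableOn_Ioi_rpow_of_lt ?_ one_pos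
          have : (-a)⁻¹ * n = -(a⁻¹ * n) := by
            rw [← neg_inv, neg_mul]
          rw [this, neg_lt_neg_iff, lt_inv_mul_iff₀ ha]
          simpa using hna

lemma integrable_weight (μ : Measure E) [μ.IsAddHaarMeasure] {u : E → ℝ} (hu : Continuous u)
    (hsupp : HasCompactSupport u) {m : ℝ} (hm : 1 < m)
    (h2m : 2 * m < Module.finrank ℝ E) :
    Integrable (fun x => ‖x‖ ^ (-(2 * m)) * |u x| ^ m) μ := by
  have hm0 : (0:ℝ) < m := lt_trans one_pos hm
  have habs : Integrable (fun x => |u x| ^ m) μ := by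
    refine Continuous.integrable_of_hasCompactSupport ?_ ?_
    · exact (hu.abs).rpow_const fun x => Or.inr hm0.le
    · have : (fun x => |u x| ^ m) = (fun y : ℝ => |y| ^ m) ∘ u := rfl
      rw [this]
      exact hsupp.comp_left (by simp [Real.zero_rpow hm0.ne'])
  obtain ⟨M, hM⟩ := hsupp.exists_bound_of_continuous hu
  have hM0 : 0 ≤ M := le_trans (norm_nonneg _) (hM 0)
  constructor
  · apply Measurable.aestronglyMeasurable
    have := hu.measurable
    fun_prop
  · rw [HasFiniteIntegral]
    have hnn : ∀ x : E, 0 ≤ ‖x‖ ^ (-(2 * m)) * |u x| ^ m := fun x =>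
      mul_nonneg (rpow_nonneg (norm_nonneg _) _) (rpow_nonneg (abs_nonneg _) _)
    have heq : ∀ x : E, (‖(‖x‖ ^ (-(2 * m)) * |u x| ^ m : ℝ)‖₊ : ℝ≥0∞)
        = ENNReal.ofReal (‖x‖ ^ (-(2 * m)) * |u x| ^ m) := fun x => by
      rw [← enorm_eq_nnnorm, ← ofReal_norm, Real.norm_eq_abs, abs_of_nonneg (hnn x)]
    simp only [enorm_eq_nnnorm, heq]
    rw [← lintegral_add_compl (fun x => ENNReal.ofReal (‖x‖ ^ (-(2 * m)) * |u x| ^ m))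
      (measurableSet_ball (x := (0:E)) (ε := 1))]
    refine ENNReal.add_lt_top.2 ⟨?_, ?_⟩
    · -- near the origin
      calc ∫⁻ x in ball (0:E) 1, ENNReal.ofReal (‖x‖ ^ (-(2 * m)) * |u x| ^ m) ∂μ
          ≤ ∫⁻ x in ball (0:E) 1, ENNReal.ofReal (M ^ m) * ENNReal.ofReal (‖x‖ ^ (-(2 * m))) ∂μ := by
            refine lintegral_mono fun x => ?_
            rw [← ENNReal.ofReal_mul (rpow_nonneg hM0 _)]
            refine ENNReal.ofReal_le_ofReal ?_
            rw [mul_comm (M ^ m)]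
            refine mul_le_mul_of_nonneg_left ?_ (rpow_nonneg (norm_nonneg _) _)
            refine Real.rpow_le_rpow (abs_nonneg _) ?_ hm0.le
            simpa [Real.norm_eq_abs] using hM x
        _ = ENNReal.ofReal (M ^ m) * ∫⁻ x in ball (0:E) 1, ENNReal.ofReal (‖x‖ ^ (-(2 * m))) ∂μ :=
            lintegral_const_mul' _ _ ENNReal.ofReal_ne_top
        _ < ∞ := ENNReal.mul_lt_top ENNReal.ofReal_lt_top
            (finite_lintegral_rpow_ball μ (by linarith) h2m)
    · -- away from the origin
      calc ∫⁻ x in (ball (0:E) 1)ᶜ, ENNReal.ofReal (‖x‖ ^ (-(2 * m)) * |u x| ^ m) ∂μ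
          ≤ ∫⁻ x in (ball (0:E) 1)ᶜ, ENNReal.ofReal (|u x| ^ m) ∂μ := by
            refine setLIntegral_mono' (measurableSet_ball).compl fun x hx => ?_
            refine ENNReal.ofReal_le_ofReal ?_
            have hx1 : (1:ℝ) ≤ ‖x‖ := by
              simpa [mem_ball, dist_zero_right, not_lt] using hx
            calc ‖x‖ ^ (-(2 * m)) * |u x| ^ m ≤ 1 * |u x| ^ m := by
                  refine mul_le_mul_of_nonneg_right ?_ (rpow_nonneg (abs_nonneg _) _)
                  exact Real.rpow_le_one_of_one_le_of_nonpos hx1 (by linarith)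
              _ = |u x| ^ m := one_mul _
        _ ≤ ∫⁻ x, ENNReal.ofReal (|u x| ^ m) ∂μ := setLIntegral_le_lintegral _ _
        _ < ∞ := by
            have := habs.hasFiniteIntegral
            rw [HasFiniteIntegral] at this
            refine lt_of_le_of_lt (le_of_eq ?_) this
            refine lintegral_congr fun x => ?_
            rw [← ofReal_norm, Real.norm_eq_abs,
              abs_of_nonneg (rpow_nonneg (abs_nonneg _) _)]

section Mink
variable {α : Type*} [MeasurableSpace α] {μ : Measure α}

lemma eLpNorm'_eq_ofReal {f : α → ℝ} {m : ℝ} (hm : 0 < m)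
    (hif : Integrable (fun x => |f x| ^ m) μ) :
    eLpNorm' f m μ = ENNReal.ofReal ((∫ x, |f x| ^ m ∂μ) ^ (1 / m)) := by
  rw [eLpNorm']
  have h1 : ∀ a : α, (‖f a‖₊ : ℝ≥0∞) ^ m = ENNReal.ofReal (|f a| ^ m) := fun a => by
    rw [← enorm_eq_nnnorm, ← ofReal_norm, Real.norm_eq_abs,
      ENNReal.ofReal_rpow_of_nonneg (abs_nonneg _) hm.le]
  simp only [enorm_eq_nnnorm, h1]
  rw [← ofReal_integral_eq_lintegral_ofReal hif
    (Filter.Eventually.of_forall fun x => rpow_nonneg (abs_nonneg _) _),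
    ENNReal.ofReal_rpow_of_nonneg (integral_nonneg fun x => rpow_nonneg (abs_nonneg _) _)
    (by positivity)]

lemma integrable_abs_rpow_add {f g : α → ℝ} {m : ℝ} (hm : 1 ≤ m)
    (hf : AEStronglyMeasurable f μ) (hg : AEStronglyMeasurable g μ)
    (hif : Integrable (fun x => |f x| ^ m) μ) (hig : Integrable (fun x => |g x| ^ m) μ) :
    Integrable (fun x => |f x + g x| ^ m) μ := by
  have hm0 : (0:ℝ) < m := lt_of_lt_of_le one_pos hm
  refine Integrable.mono' (((hif.add hig).const_mul ((2:ℝ) ^ m))) ?_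
    (Filter.Eventually.of_forall fun x => ?_)
  · have hmeas : Measurable fun y : ℝ => |y| ^ m := by fun_prop
    exact (hmeas.comp_aemeasurable (hf.add hg).aemeasurable).aestronglyMeasurable
  · rw [Real.norm_eq_abs, abs_of_nonneg (rpow_nonneg (abs_nonneg _) _)]
    calc |f x + g x| ^ m ≤ (2 * max |f x| |g x|) ^ m := by
          refine Real.rpow_le_rpow (abs_nonneg _) ?_ hm0.le
          calc |f x + g x| ≤ |f x| + |g x| := abs_add_le _ _
            _ ≤ max |f x| |g x| + max |f x| |g x| := by
                exact add_le_add (le_max_left _ _) (le_max_right _ _)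
            _ = 2 * max |f x| |g x| := (two_mul _).symm
      _ = 2 ^ m * max |f x| |g x| ^ m := Real.mul_rpow (by norm_num)
          (le_max_of_le_left (abs_nonneg _))
      _ ≤ 2 ^ m * (|f x| ^ m + |g x| ^ m) := by
          refine mul_le_mul_of_nonneg_left ?_ (rpow_nonneg (by norm_num) _)
          rcases max_cases |f x| |g x| with ⟨h1, _⟩ | ⟨h1, _⟩ <;> rw [h1]
          · exact le_add_of_nonneg_right (rpow_nonneg (abs_nonneg _) _)
          · exact le_add_of_nonneg_left (rpow_nonneg (abs_nonneg _) _)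

lemma real_minkowski {f g h : α → ℝ} {m : ℝ} (hm : 1 ≤ m)
    (hf : AEStronglyMeasurable f μ) (hg : AEStronglyMeasurable g μ)
    (hh : ∀ x, h x = f x + g x)
    (hif : Integrable (fun x => |f x| ^ m) μ) (hig : Integrable (fun x => |g x| ^ m) μ) :
    (∫ x, |h x| ^ m ∂μ) ^ (1 / m) ≤ (∫ x, |f x| ^ m ∂μ) ^ (1 / m)
      + (∫ x, |g x| ^ m ∂μ) ^ (1 / m) := by
  have hm0 : (0:ℝ) < m := lt_of_lt_of_le one_pos hm
  have hih : Integrable (fun x => |h x| ^ m) μ := by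
    have := integrable_abs_rpow_add hm hf hg hif hig
    refine this.congr (Filter.Eventually.of_forall fun x => by simp only [hh x])
  have key : eLpNorm' h m μ ≤ eLpNorm' f m μ + eLpNorm' g m μ := by
    have : h = f + g := funext hh
    rw [this]
    exact eLpNorm'_add_le hf hg hm
  rw [eLpNorm'_eq_ofReal hm0 hih, eLpNorm'_eq_ofReal hm0 hif, eLpNorm'_eq_ofReal hm0 hig,
    ← ENNReal.ofReal_add (by positivity) (by positivity)] at key
  exact (ENNReal.ofReal_le_ofReal_iff (by positivity)).mp key

end Mink

lemma lap_continuous {N : ℕ} {u : EuclideanSpace ℝ (Fin N) → ℝ} (hu : ContDiff ℝ (⊤ : ℕ∞) u) :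
    Continuous (lap u) := by
  have h2 : Continuous fun x => iteratedFDeriv ℝ 2 u x :=
    hu.continuous_iteratedFDeriv (WithTop.coe_le_coe.mpr le_top)
  unfold lap
  refine continuous_finset_sum _ fun i _ => ?_
  exact ((ContinuousMultilinearMap.apply ℝ
    (fun _ : Fin 2 => EuclideanSpace ℝ (Fin N)) ℝ
    ![EuclideanSpace.single i 1, EuclideanSpace.single i 1]).continuous).comp h2

lemma lap_hasCompactSupport {N : ℕ} {u : EuclideanSpace ℝ (Fin N) → ℝ}
    (hcs : HasCompactSupport u) : HasCompactSupport (lap u) := by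
  have : lap u = (fun F : ContinuousMultilinearMap ℝ
      (fun _ : Fin 2 => EuclideanSpace ℝ (Fin N)) ℝ =>
      ∑ i : Fin N, F ![EuclideanSpace.single i 1, EuclideanSpace.single i 1]) ∘
      (iteratedFDeriv ℝ 2 u) := rfl
  rw [this]
  exact (hcs.iteratedFDeriv 2).comp_left (by simp)

/-- For `0 ≤ λ < Λ_{N,m}^{1/m}`, with `Λ_{N,m}` the sharp constant of the Hardy–Rellich
inequality, the norm `‖u‖_λ = ‖−Δu − λ|x|^{-2}u‖_{L^m}` is equivalent to `‖Δu‖_{L^m}` on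
smooth compactly supported radial functions. -/
theorem hardy_norm_equivalence (N : ℕ) (hN : 3 ≤ N) (m : ℝ) (hm : 1 < m) (h2m : 2 * m < N)
    (Λ : ℝ)
    (hΛ : ∀ u : EuclideanSpace ℝ (Fin N) → ℝ, ContDiff ℝ (⊤ : ℕ∞) u → HasCompactSupport u →
      Λ * ∫ x, ‖x‖ ^ (-(2 * m)) * |u x| ^ m ≤ ∫ x, |lap u x| ^ m)
    (hΛsharp : ∀ Λ' : ℝ,
      (∀ u : EuclideanSpace ℝ (Fin N) → ℝ, ContDiff ℝ (⊤ : ℕ∞) u → HasCompactSupport u →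
        Λ' * ∫ x, ‖x‖ ^ (-(2 * m)) * |u x| ^ m ≤ ∫ x, |lap u x| ^ m) → Λ' ≤ Λ)
    (lam : ℝ) (hlam0 : 0 ≤ lam) (hlam : lam < Λ ^ (1 / m)) :
    ∃ c C : ℝ, 0 < c ∧ 0 < C ∧
      ∀ u : EuclideanSpace ℝ (Fin N) → ℝ, ContDiff ℝ (⊤ : ℕ∞) u → HasCompactSupport u →
        (∀ x y : EuclideanSpace ℝ (Fin N), ‖x‖ = ‖y‖ → u x = u y) →
        c * (∫ x, |lap u x| ^ m) ^ (1 / m) ≤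
            (∫ x, |(-(lap u x)) - lam * ‖x‖ ^ (-(2 : ℝ)) * u x| ^ m) ^ (1 / m) ∧
          (∫ x, |(-(lap u x)) - lam * ‖x‖ ^ (-(2 : ℝ)) * u x| ^ m) ^ (1 / m) ≤
            C * (∫ x, |lap u x| ^ m) ^ (1 / m) := by
  have hm0 : (0:ℝ) < m := lt_trans one_pos hm
  have hΛ0 : 0 ≤ Λ := by
    refine hΛsharp 0 fun u hu hcs => ?_
    rw [zero_mul]
    exact integral_nonneg fun x => rpow_nonneg (abs_nonneg _) _
  have hΛpos : 0 < Λ := by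
    rcases hΛ0.lt_or_eq with h | h
    · exact h
    · exfalso
      rw [← h, Real.zero_rpow (by positivity)] at hlam
      linarith
  have hΛm : 0 < Λ ^ (1 / m) := Real.rpow_pos_of_pos hΛpos _
  set θ : ℝ := lam / Λ ^ (1 / m) with hθ
  have hθ0 : 0 ≤ θ := div_nonneg hlam0 hΛm.le
  have hθ1 : θ < 1 := (div_lt_one hΛm).mpr hlam
  refine ⟨1 - θ, 1 + θ, by linarith, by linarith, ?_⟩
  intro u hu hcs _hrad
  have hE : (3:ℕ) ≤ N := hN
  set f := lap u with hfdef
  set g : EuclideanSpace ℝ (Fin N) → ℝ := fun x => lam * ‖x‖ ^ (-(2:ℝ)) * u x with hgdef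
  have hf_cont : Continuous f := lap_continuous hu
  have hf_supp : HasCompactSupport f := lap_hasCompactSupport hcs
  have hf_meas : AEStronglyMeasurable f (volume : Measure (EuclideanSpace ℝ (Fin N))) :=
    hf_cont.aestronglyMeasurable
  have hg_meas : AEStronglyMeasurable g (volume : Measure (EuclideanSpace ℝ (Fin N))) := by
    apply Measurable.aestronglyMeasurable
    have := hu.continuous.measurable
    fun_prop
  have hif : Integrable (fun x => |f x| ^ m) (volume : Measure (EuclideanSpace ℝ (Fin N))) := by
    refine Continuous.integrable_of_hasCompactSupport
      ((hf_cont.abs).rpow_const fun x => Or.inr hm0.le) ?_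
    have : (fun x => |f x| ^ m) = (fun y : ℝ => |y| ^ m) ∘ f := rfl
    rw [this]
    exact hf_supp.comp_left (by simp [Real.zero_rpow hm0.ne'])
  have hfinrank : (2:ℝ) * m < Module.finrank ℝ (EuclideanSpace ℝ (Fin N)) := by
    simpa using h2m
  have hweight : Integrable (fun x => ‖x‖ ^ (-(2 * m)) * |u x| ^ m) (volume : Measure (EuclideanSpace ℝ (Fin N))) :=
    integrable_weight volume hu.continuous hcs hm hfinrank
  -- pointwise formula for |g|^m
  have habs_g : ∀ x : EuclideanSpace ℝ (Fin N), |g x| ^ m = lam ^ m * (‖x‖ ^ (-(2 * m)) * |u x| ^ m) := by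
    intro x
    have h1 : |g x| = lam * (‖x‖ ^ (-(2:ℝ)) * |u x|) := by
      rw [hgdef]
      simp only []
      rw [mul_assoc, abs_mul, abs_mul, abs_of_nonneg hlam0,
        abs_of_nonneg (rpow_nonneg (norm_nonneg x) _)]
    rw [h1, Real.mul_rpow hlam0 (mul_nonneg (rpow_nonneg (norm_nonneg x) _) (abs_nonneg _)),
      Real.mul_rpow (rpow_nonneg (norm_nonneg x) _) (abs_nonneg _),
      ← Real.rpow_mul (norm_nonneg x), show ((-2):ℝ) * m = -(2 * m) by ring]
  have hig : Integrable (fun x => |g x| ^ m) (volume : Measure (EuclideanSpace ℝ (Fin N))) := by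
    refine (hweight.const_mul (lam ^ m)).congr
      (Filter.Eventually.of_forall fun x => (habs_g x).symm)
  -- abbreviations
  set A : ℝ := ∫ x, |f x| ^ m with hA
  set B : ℝ := ∫ x, |g x| ^ m with hB
  set I : ℝ := ∫ x : EuclideanSpace ℝ (Fin N), ‖x‖ ^ (-(2 * m)) * |u x| ^ m with hI
  have hA0 : 0 ≤ A := integral_nonneg fun x => rpow_nonneg (abs_nonneg _) _
  have hB0 : 0 ≤ B := integral_nonneg fun x => rpow_nonneg (abs_nonneg _) _
  have hHardy : Λ * I ≤ A := hΛ u hu hcs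
  have hI0 : 0 ≤ I := integral_nonneg fun x =>
    mul_nonneg (rpow_nonneg (norm_nonneg _) _) (rpow_nonneg (abs_nonneg _) _)
  have hBI : B = lam ^ m * I := by
    rw [hB, hI, ← integral_const_mul]
    exact integral_congr_ae (Filter.Eventually.of_forall habs_g)
  -- B^(1/m) ≤ θ * A^(1/m)
  have hBle : B ^ (1 / m) ≤ θ * A ^ (1 / m) := by
    have h1 : B ≤ lam ^ m * (A / Λ) := by
      rw [hBI]
      refine mul_le_mul_of_nonneg_left ?_ (rpow_nonneg hlam0 _)
      rw [le_div_iff₀ hΛpos, mul_comm]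
      exact hHardy
    calc B ^ (1 / m) ≤ (lam ^ m * (A / Λ)) ^ (1 / m) :=
          Real.rpow_le_rpow hB0 h1 (by positivity)
      _ = lam * (A / Λ) ^ (1 / m) := by
          rw [Real.mul_rpow (rpow_nonneg hlam0 _) (div_nonneg hA0 hΛpos.le),
            ← Real.rpow_mul hlam0, mul_one_div_cancel hm0.ne', Real.rpow_one]
      _ = θ * A ^ (1 / m) := by
          rw [Real.div_rpow hA0 hΛpos.le, hθ]
          field_simp
  -- rewrite the target integrand
  have hD : (∫ x : EuclideanSpace ℝ (Fin N), |(-(lap u x)) - lam * ‖x‖ ^ (-(2:ℝ)) * u x| ^ m)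
      = ∫ x : EuclideanSpace ℝ (Fin N), |f x + g x| ^ m := by
    refine integral_congr_ae (Filter.Eventually.of_forall fun x => ?_)
    have h1 : (-(lap u x)) - lam * ‖x‖ ^ (-(2:ℝ)) * u x = -(f x + g x) := by
      rw [hfdef, hgdef]; ring
    simp only [h1, abs_neg]
  set D : ℝ := ∫ x : EuclideanSpace ℝ (Fin N), |f x + g x| ^ m with hDdef
  have hD0 : 0 ≤ D := integral_nonneg fun x => rpow_nonneg (abs_nonneg _) _
  -- Minkowski both ways
  have hifg : Integrable (fun x => |f x + g x| ^ m) (volume : Measure (EuclideanSpace ℝ (Fin N))) :=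
    integrable_abs_rpow_add hm.le hf_meas hg_meas hif hig
  have hup : D ^ (1 / m) ≤ A ^ (1 / m) + B ^ (1 / m) := by
    exact real_minkowski hm.le hf_meas hg_meas (fun x => rfl) hif hig
  have hdown : A ^ (1 / m) ≤ D ^ (1 / m) + B ^ (1 / m) := by
    have hnegg : Integrable (fun x => |(-(g x))| ^ m) (volume : Measure (EuclideanSpace ℝ (Fin N))) :=
      hig.congr (Filter.Eventually.of_forall fun x => by simp only [abs_neg])
    have h := real_minkowski (f := fun x => f x + g x) (g := fun x => -(g x)) (h := f)
      hm.le (hf_meas.add hg_meas) hg_meas.neg (fun x => by ring) hifg hnegg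
    have hBneg : (∫ x : EuclideanSpace ℝ (Fin N), |(-(g x))| ^ m) = B := by
      rw [hB]
      exact integral_congr_ae (Filter.Eventually.of_forall fun x => by simp only [abs_neg])
    rwa [hBneg] at h
  rw [hD]
  constructor
  · nlinarith [Real.rpow_nonneg hA0 (1/m)]
  · nlinarith [Real.rpow_nonneg hA0 (1/m)]
end

section
/- Let N ≥ 3, p > 1, and let (u_k) be a bounded sequence in L^p(ℝ^N) with u_k → u a.e. in ℝ^N. Let w¹, …, w^M ∈ L^p(ℝ^N) and let (y_k^{(1)}), …, (y_k^{(M)}) ⊂ ℝ^N be sequences with |y_k^{(n)} − y_k^{(i)}| → ∞ for n ≠ i and u_k(· + y_k^{(n)}) → w^{(n)} a.e. for each n. Then limsup_k ‖u_k‖_{L^p}^p ≥ Σ_{n=1}^M ‖w^{(n)}‖_{L^p}^p. -/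
open Real MeasureTheory Filter

/-- Iterated Brézis–Lieb inequality for profile decompositions: if `(u_k)` is bounded in
`L^p(ℝ^N)`, converges a.e. to `u`, and has `M` profiles `w⁽ⁿ⁾` obtained as a.e. limits
along pairwise diverging translations `y_k⁽ⁿ⁾`, then
`Σ_n ‖w⁽ⁿ⁾‖_{L^p}^p ≤ limsup_k ‖u_k‖_{L^p}^p`. -/
theorem iterated_brezis_lieb (N : ℕ) (hN : 3 ≤ N) (p : ℝ) (hp : 1 < p) (M : ℕ)
    (u : ℕ → EuclideanSpace ℝ (Fin N) → ℝ) (ulim : EuclideanSpace ℝ (Fin N) → ℝ) (C : ℝ)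
    (humem : ∀ k, MemLp (u k) (ENNReal.ofReal p) volume)
    (hbd : ∀ k, (∫ x, |u k x| ^ p) ≤ C)
    (hae : ∀ᵐ x : EuclideanSpace ℝ (Fin N) ∂volume,
      Tendsto (fun k => u k x) atTop (nhds (ulim x)))
    (w : Fin M → EuclideanSpace ℝ (Fin N) → ℝ)
    (y : Fin M → ℕ → EuclideanSpace ℝ (Fin N))
    (hw : ∀ n, MemLp (w n) (ENNReal.ofReal p) volume)
    (hdiv : ∀ n i : Fin M, n ≠ i → Tendsto (fun k => ‖y n k - y i k‖) atTop atTop)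
    (hconv : ∀ n : Fin M, ∀ᵐ x : EuclideanSpace ℝ (Fin N) ∂volume,
      Tendsto (fun k => u k (x + y n k)) atTop (nhds (w n x))) :
    ∑ n : Fin M, ∫ x, |w n x| ^ p ≤ limsup (fun k => ∫ x, |u k x| ^ p) atTop := by
  have hp0 : (0 : ℝ) < p := lt_trans one_pos hp
  have hpne : (ENNReal.ofReal p) ≠ 0 := by
    simp [ENNReal.ofReal_eq_zero, not_le, hp0]
  have hptop : (ENNReal.ofReal p) ≠ ⊤ := ENNReal.ofReal_ne_top
  have hpt : (ENNReal.ofReal p).toReal = p := ENNReal.toReal_ofReal hp0.le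
  -- continuity of t ↦ |t|^p
  have hcont : Continuous fun t : ℝ => |t| ^ p :=
    continuous_abs.rpow_const fun t => Or.inr hp0.le
  -- integrability facts
  have huint : ∀ k, Integrable (fun x => |u k x| ^ p) (volume : Measure (EuclideanSpace ℝ (Fin N))) := by
    intro k
    have := (humem k).integrable_norm_rpow hpne hptop
    simpa [hpt, Real.norm_eq_abs] using this
  have hwint : ∀ n, Integrable (fun x => |w n x| ^ p) (volume : Measure (EuclideanSpace ℝ (Fin N))) := by
    intro n
    have := (hw n).integrable_norm_rpow hpne hptop
    simpa [hpt, Real.norm_eq_abs] using this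
  -- ENNReal versions
  have hofr : ∀ k, ENNReal.ofReal (∫ x, |u k x| ^ p) =
      ∫⁻ x, ENNReal.ofReal (|u k x| ^ p) := by
    intro k
    exact ofReal_integral_eq_lintegral_ofReal (huint k)
      (Eventually.of_forall fun x => by positivity)
  have hofw : ∀ n, ENNReal.ofReal (∫ x, |w n x| ^ p) =
      ∫⁻ x, ENNReal.ofReal (|w n x| ^ p) := by
    intro n
    exact ofReal_integral_eq_lintegral_ofReal (hwint n)
      (Eventually.of_forall fun x => by positivity)
  -- measurability
  have gmeas : ∀ n, AEMeasurable (fun x : EuclideanSpace ℝ (Fin N) => ENNReal.ofReal (|w n x| ^ p)) volume := by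
    intro n
    exact (ENNReal.measurable_ofReal.comp hcont.measurable).comp_aemeasurable
      (hw n).aestronglyMeasurable.aemeasurable
  have fmeas : ∀ k, AEMeasurable (fun x : EuclideanSpace ℝ (Fin N) => ENNReal.ofReal (|u k x| ^ p)) volume := by
    intro k
    exact (ENNReal.measurable_ofReal.comp hcont.measurable).comp_aemeasurable
      (humem k).aestronglyMeasurable.aemeasurable
  have ftmeas : ∀ k n, AEMeasurable
      (fun x : EuclideanSpace ℝ (Fin N) => ENNReal.ofReal (|u k (x + y n k)| ^ p)) volume := by
    intro k n
    exact (ENNReal.measurable_ofReal.comp hcont.measurable).comp_aemeasurable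
      ((humem k).aestronglyMeasurable.aemeasurable.comp_quasiMeasurePreserving
        (measurePreserving_add_right volume (y n k)).quasiMeasurePreserving)
  -- reduce to eventual upper bounds of the sequence of norms
  rw [Filter.limsup_eq]
  refine le_csInf ⟨C, Eventually.of_forall hbd⟩ ?_
  intro a ha
  simp only [Set.mem_setOf_eq] at ha
  have ha0 : 0 ≤ a := by
    obtain ⟨k, hk⟩ := ha.exists
    exact le_trans (integral_nonneg fun x => by positivity) hk
  -- key claim for each radius R
  have key : ∀ R : ℕ, ∑ n : Fin M,
      ∫⁻ x in Metric.ball (0 : EuclideanSpace ℝ (Fin N)) (R : ℝ), ENNReal.ofReal (|w n x| ^ p)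
      ≤ ENNReal.ofReal a := by
    intro R
    -- translation identity
    have htrans : ∀ k n, ∫⁻ x in Metric.ball (0 : EuclideanSpace ℝ (Fin N)) (R : ℝ),
        ENNReal.ofReal (|u k (x + y n k)| ^ p)
        = ∫⁻ x in Metric.ball (y n k) (R : ℝ), ENNReal.ofReal (|u k x| ^ p) := by
      intro k n
      have hpre : (fun x : EuclideanSpace ℝ (Fin N) => x + y n k) ⁻¹' Metric.ball (y n k) (R : ℝ)
          = Metric.ball (0 : EuclideanSpace ℝ (Fin N)) (R : ℝ) := by
        ext x
        simp [Metric.mem_ball, dist_eq_norm, add_sub_cancel_right]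
      have := (measurePreserving_add_right (volume : Measure (EuclideanSpace ℝ (Fin N))) (y n k)).setLIntegral_comp_preimage_emb
        (MeasurableEquiv.addRight (y n k)).measurableEmbedding
        (fun x => ENNReal.ofReal (|u k x| ^ p)) (Metric.ball (y n k) (R : ℝ))
      simpa [hpre] using this
    -- a.e. convergence of the summed translated functions
    have haesum : ∀ᵐ x : EuclideanSpace ℝ (Fin N) ∂volume, Tendsto
        (fun k => ∑ n : Fin M, ENNReal.ofReal (|u k (x + y n k)| ^ p)) atTop
        (nhds (∑ n : Fin M, ENNReal.ofReal (|w n x| ^ p))) := by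
      have hall : ∀ᵐ x : EuclideanSpace ℝ (Fin N) ∂volume, ∀ n : Fin M,
          Tendsto (fun k => u k (x + y n k)) atTop (nhds (w n x)) :=
        (ae_all_iff).2 hconv
      filter_upwards [hall] with x hx
      refine tendsto_finset_sum _ fun n _ => ?_
      exact (ENNReal.continuous_ofReal.tendsto _).comp
        ((hcont.tendsto _).comp (hx n))
    -- Fatou on the ball
    have fatou : ∫⁻ x in Metric.ball (0 : EuclideanSpace ℝ (Fin N)) (R : ℝ),
        ∑ n : Fin M, ENNReal.ofReal (|w n x| ^ p)
        ≤ liminf (fun k => ∫⁻ x in Metric.ball (0 : EuclideanSpace ℝ (Fin N)) (R : ℝ),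
            ∑ n : Fin M, ENNReal.ofReal (|u k (x + y n k)| ^ p)) atTop := by
      have hm : ∀ k, AEMeasurable
          (fun x : EuclideanSpace ℝ (Fin N) => ∑ n : Fin M, ENNReal.ofReal (|u k (x + y n k)| ^ p))
          (volume.restrict (Metric.ball (0 : EuclideanSpace ℝ (Fin N)) (R : ℝ))) := by
        intro k
        exact (Finset.aemeasurable_fun_sum Finset.univ fun n _ => (ftmeas k n)).restrict
      refine le_trans (le_of_eq (lintegral_congr_ae ?_)) (lintegral_liminf_le' hm)
      filter_upwards [ae_restrict_of_ae haesum] with x hx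
      exact (hx.liminf_eq).symm
    -- eventual disjointness of the translated balls
    have hdisj : ∀ᶠ k in atTop, ∀ n i : Fin M, n ≠ i →
        Disjoint (Metric.ball (y n k) (R : ℝ)) (Metric.ball (y i k) (R : ℝ)) := by
      rw [eventually_all]
      intro n
      rw [eventually_all]
      intro i
      rcases eq_or_ne n i with h | h
      · exact Eventually.of_forall fun k hni => absurd h hni
      · filter_upwards [(hdiv n i h).eventually_ge_atTop (2 * (R : ℝ) + 1)] with k hk _
        refine Metric.ball_disjoint_ball ?_
        rw [dist_eq_norm]
        linarith [hk]
    -- eventual bound by ofReal a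
    have hev : ∀ᶠ k in atTop,
        (∫⁻ x in Metric.ball (0 : EuclideanSpace ℝ (Fin N)) (R : ℝ),
          ∑ n : Fin M, ENNReal.ofReal (|u k (x + y n k)| ^ p)) ≤ ENNReal.ofReal a := by
      filter_upwards [hdisj, ha] with k hk hak
      have hsum : (∫⁻ x in Metric.ball (0 : EuclideanSpace ℝ (Fin N)) (R : ℝ),
          ∑ n : Fin M, ENNReal.ofReal (|u k (x + y n k)| ^ p))
          = ∑ n : Fin M, ∫⁻ x in Metric.ball (y n k) (R : ℝ),
              ENNReal.ofReal (|u k x| ^ p) := by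
        rw [lintegral_finset_sum' Finset.univ fun n _ => (ftmeas k n).restrict]
        exact Finset.sum_congr rfl fun n _ => htrans k n
      rw [hsum]
      calc ∑ n : Fin M, ∫⁻ x in Metric.ball (y n k) (R : ℝ), ENNReal.ofReal (|u k x| ^ p)
          = ∫⁻ x in ⋃ n ∈ (Finset.univ : Finset (Fin M)), Metric.ball (y n k) (R : ℝ),
              ENNReal.ofReal (|u k x| ^ p) := by
            rw [lintegral_biUnion_finset ?hd (fun n _ => Metric.isOpen_ball.measurableSet)]
            case hd => exact fun n _ i _ hni => hk n i hni
        _ ≤ ∫⁻ x, ENNReal.ofReal (|u k x| ^ p) := setLIntegral_le_lintegral _ _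
        _ = ENNReal.ofReal (∫ x, |u k x| ^ p) := (hofr k).symm
        _ ≤ ENNReal.ofReal a := ENNReal.ofReal_le_ofReal hak
    -- combine
    have hsumg : ∑ n : Fin M,
        ∫⁻ x in Metric.ball (0 : EuclideanSpace ℝ (Fin N)) (R : ℝ), ENNReal.ofReal (|w n x| ^ p)
        = ∫⁻ x in Metric.ball (0 : EuclideanSpace ℝ (Fin N)) (R : ℝ),
            ∑ n : Fin M, ENNReal.ofReal (|w n x| ^ p) :=
      (lintegral_finset_sum' Finset.univ fun n _ => (gmeas n).restrict).symm
    rw [hsumg]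
    refine le_trans fatou ?_
    exact le_trans (liminf_le_limsup) (limsup_le_of_le (by isBoundedDefault) hev)
  -- pass to the limit R → ∞
  have hA : ∀ n : Fin M, ∫⁻ x, ENNReal.ofReal (|w n x| ^ p)
      = ⨆ R : ℕ, ∫⁻ x in Metric.ball (0 : EuclideanSpace ℝ (Fin N)) (R : ℝ), ENNReal.ofReal (|w n x| ^ p) := by
    intro n
    have hmono : ∀ᵐ x : EuclideanSpace ℝ (Fin N) ∂volume, Monotone fun R : ℕ =>
        (Metric.ball (0 : EuclideanSpace ℝ (Fin N)) (R : ℝ)).indicator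
          (fun x => ENNReal.ofReal (|w n x| ^ p)) x := by
      refine Eventually.of_forall fun x R R' hRR' => ?_
      exact Set.indicator_le_indicator_of_subset
        (Metric.ball_subset_ball (by exact_mod_cast hRR')) (fun _ => zero_le) x
    have heq : ∀ᵐ x : EuclideanSpace ℝ (Fin N) ∂volume,
        (⨆ R : ℕ, (Metric.ball (0 : EuclideanSpace ℝ (Fin N)) (R : ℝ)).indicator
          (fun x => ENNReal.ofReal (|w n x| ^ p)) x)
        = ENNReal.ofReal (|w n x| ^ p) := by
      refine Eventually.of_forall fun x => ?_
      obtain ⟨R, hR⟩ := exists_nat_gt ‖x‖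
      refine le_antisymm (iSup_le fun R' => Set.indicator_le_self _ _ x) ?_
      refine le_trans (le_of_eq ?_) (le_iSup _ R)
      rw [Set.indicator_of_mem]
      simpa [Metric.mem_ball, dist_eq_norm] using hR
    calc ∫⁻ x, ENNReal.ofReal (|w n x| ^ p)
        = ∫⁻ x, ⨆ R : ℕ, (Metric.ball (0 : EuclideanSpace ℝ (Fin N)) (R : ℝ)).indicator
            (fun x => ENNReal.ofReal (|w n x| ^ p)) x :=
          (lintegral_congr_ae heq).symm
      _ = ⨆ R : ℕ, ∫⁻ x, (Metric.ball (0 : EuclideanSpace ℝ (Fin N)) (R : ℝ)).indicator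
            (fun x => ENNReal.ofReal (|w n x| ^ p)) x :=
          lintegral_iSup' (fun R => (gmeas n).indicator Metric.isOpen_ball.measurableSet)
            hmono
      _ = ⨆ R : ℕ, ∫⁻ x in Metric.ball (0 : EuclideanSpace ℝ (Fin N)) (R : ℝ), ENNReal.ofReal (|w n x| ^ p) := by
          refine iSup_congr fun R => ?_
          rw [lintegral_indicator Metric.isOpen_ball.measurableSet]
  -- assemble the ENNReal inequality
  have hEN : ∑ n : Fin M, ∫⁻ x, ENNReal.ofReal (|w n x| ^ p) ≤ ENNReal.ofReal a := by
    calc ∑ n : Fin M, ∫⁻ x, ENNReal.ofReal (|w n x| ^ p)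
        = ∑ n : Fin M, ⨆ R : ℕ,
            ∫⁻ x in Metric.ball (0 : EuclideanSpace ℝ (Fin N)) (R : ℝ), ENNReal.ofReal (|w n x| ^ p) :=
          Finset.sum_congr rfl fun n _ => hA n
      _ = ⨆ R : ℕ, ∑ n : Fin M,
            ∫⁻ x in Metric.ball (0 : EuclideanSpace ℝ (Fin N)) (R : ℝ), ENNReal.ofReal (|w n x| ^ p) := by
          refine ENNReal.finsetSum_iSup_of_monotone fun n R R' hRR' => ?_
          exact lintegral_mono_set (Metric.ball_subset_ball (by exact_mod_cast hRR'))
      _ ≤ ENNReal.ofReal a := iSup_le key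
  -- return to real numbers
  rw [← ENNReal.ofReal_le_ofReal_iff ha0]
  calc ENNReal.ofReal (∑ n : Fin M, ∫ x, |w n x| ^ p)
      = ∑ n : Fin M, ENNReal.ofReal (∫ x, |w n x| ^ p) :=
        ENNReal.ofReal_sum_of_nonneg fun n _ => integral_nonneg fun x => by positivity
    _ = ∑ n : Fin M, ∫⁻ x, ENNReal.ofReal (|w n x| ^ p) :=
        Finset.sum_congr rfl fun n _ => hofw n
    _ ≤ ENNReal.ofReal a := hEN
end
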